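/- arXiv:1802.03900 — 4 statements merged into one kernel-verified Lean document; each statement's English description precedes it below -/
import Mathlib

section
/- Under the MDP regularity assumptions, the Bellman optimality operator F has a unique fixed point Q* among bounded measurable functions Q : X × A → ℝ, and this fixed point satisfies ‖Q*‖_∞ ≤ V_max and, for each a ∈ A, the function x ↦ Q*(x,a) is Lipschitz on X with Lipschitz constant M_r + γ V_max M_p. -/
open MeasureTheory BoundedContinuousFunction

/-!
For a bounded `Q` that is measurable on `X`, the function `F Q` is Lipschitz on `X` in the state,
with constant `M_r + γ ‖Q‖ ∫ W`: the modulus `W` of the transition density absorbs the bound on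
`max_b Q`. Hence `F` maps the complete space of bounded continuous functions on `X × A` into
itself, where it is a `γ`-contraction for the sup norm, and its Banach fixed point, extended by
zero off `X`, is `Q*`. From `‖Q*‖ ≤ R_max + γ ‖Q*‖` we get `‖Q*‖ ≤ V_max`, and the Lipschitz
estimate for `Q* = F Q*` gives the constant `M_r + γ V_max M_p`. A bounded measurable fixed point
is Lipschitz on `X` for the same reason, so it lies in that space and equals `Q*`.
-/

lemma abs_ciSup_sub_ciSup_le {A : Type*} [Finite A] [Nonempty A] {f g : A → ℝ} {c : ℝ}
    (h : ∀ b, |f b - g b| ≤ c) : |(⨆ b, f b) - ⨆ b, g b| ≤ c := by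
  have hf := (Set.finite_range f).bddAbove
  have hg := (Set.finite_range g).bddAbove
  rw [abs_sub_le_iff, sub_le_iff_le_add, sub_le_iff_le_add]
  exact ⟨ciSup_le fun b => by linarith [le_ciSup hg b, (abs_le.1 (h b)).2],
    ciSup_le fun b => by linarith [le_ciSup hf b, (abs_le.1 (h b)).1]⟩

lemma abs_ciSup_le {A : Type*} [Finite A] [Nonempty A] {f : A → ℝ} {c : ℝ}
    (h : ∀ b, |f b| ≤ c) : |⨆ b, f b| ≤ c := by
  simpa using abs_ciSup_sub_ciSup_le (g := fun _ => 0) (by simpa using h)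

lemma abs_integral_mul_le {Ω : Type*} [MeasurableSpace Ω] {μ : Measure Ω} {f w g : Ω → ℝ}
    {c : ℝ} (hw : Integrable w μ) (hfw : ∀ᵐ y ∂μ, |f y| ≤ w y) (hg : ∀ᵐ y ∂μ, |g y| ≤ c) :
    |∫ y, f y * g y ∂μ| ≤ c * ∫ y, w y ∂μ := by
  rw [← integral_const_mul c w, ← Real.norm_eq_abs]
  refine norm_integral_le_of_norm_le (hw.const_mul c) ?_
  filter_upwards [hfw, hg] with y hfy hgy
  rw [Real.norm_eq_abs, abs_mul, mul_comm c]
  exact mul_le_mul hfy hgy (abs_nonneg _) ((abs_nonneg _).trans hfy)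

section MarkovDecisionProcess

variable {S A : Type*}

noncomputable def bellmanOp [MeasurableSpace S] (μ : Measure S) (γ : ℝ) (r : S → A → ℝ)
    (p : S → S → A → ℝ) (Q : S → A → ℝ) (x : S) (a : A) : ℝ :=
  r x a + γ * ∫ y, p y x a * ⨆ b, Q y b ∂μ

lemma bellmanOp_congr [MeasurableSpace S] {ν : Measure S} {X : Set S} (hX : MeasurableSet X) {γ : ℝ}
    {r : S → A → ℝ} {p : S → S → A → ℝ} {Q Q' : S → A → ℝ} (h : ∀ y ∈ X, ∀ b, Q y b = Q' y b) :
    bellmanOp (ν.restrict X) γ r p Q = bellmanOp (ν.restrict X) γ r p Q' := by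
  ext x a
  unfold bellmanOp
  congr 2
  refine setIntegral_congr_fun hX fun y hy => ?_
  simp only [h y hy]

/-- `p · x a` is the density, with respect to `ν` on `X`, of the next state after action `a` in
state `x`; it is Lipschitz in `x` with integrable modulus `W`. -/
structure LipschitzMDP [PseudoMetricSpace S] [MeasurableSpace S] (ν : Measure S) (X : Set S) (γ : ℝ)
    (r : S → A → ℝ) (p : S → S → A → ℝ) (R Mr : ℝ) (W : S → ℝ) : Prop where
  measurableSet : MeasurableSet X
  discount_nonneg : 0 ≤ γ
  discount_lt_one : γ < 1
  abs_reward_le : ∀ x ∈ X, ∀ a, |r x a| ≤ R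
  abs_reward_sub_le : ∀ a, ∀ x ∈ X, ∀ x' ∈ X, |r x a - r x' a| ≤ Mr * dist x x'
  density_nonneg : ∀ x ∈ X, ∀ a, ∀ y ∈ X, 0 ≤ p y x a
  integral_density : ∀ x ∈ X, ∀ a, ∫ y in X, p y x a ∂ν = 1
  integrableOn_modulus : IntegrableOn W X ν
  abs_density_sub_le : ∀ a, ∀ x ∈ X, ∀ x' ∈ X, ∀ y ∈ X, |p y x a - p y x' a| ≤ W y * dist x x'

namespace LipschitzMDP

variable [PseudoMetricSpace S] [MeasurableSpace S] {ν : Measure S} {X : Set S} {γ R Mr : ℝ}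
  {r : S → A → ℝ} {p : S → S → A → ℝ} {W : S → ℝ} {x x' : S} {Q Q' : S → A → ℝ} {c c' : ℝ}

lemma integrable_density (h : LipschitzMDP ν X γ r p R Mr W) (hx : x ∈ X) (a : A) :
    Integrable (fun y => p y x a) (ν.restrict X) :=
  .of_integral_ne_zero (by rw [h.integral_density x hx a]; exact one_ne_zero)

lemma abs_integral_density_mul_le (h : LipschitzMDP ν X γ r p R Mr W) (hx : x ∈ X) (a : A)
    {v : S → ℝ} (hv : ∀ y ∈ X, |v y| ≤ c) : |∫ y in X, p y x a * v y ∂ν| ≤ c := by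
  have hp : ∀ y ∈ X, |p y x a| ≤ p y x a := fun y hy =>
    (abs_of_nonneg (h.density_nonneg x hx a y hy)).le
  simpa [h.integral_density x hx a] using abs_integral_mul_le (h.integrable_density hx a)
    (ae_restrict_of_forall_mem h.measurableSet hp) (ae_restrict_of_forall_mem h.measurableSet hv)

variable [Finite A] [Nonempty A]

lemma integrable_density_mul_iSup (h : LipschitzMDP ν X γ r p R Mr W) (hx : x ∈ X) (a : A)
    (hQ : ∀ b, AEMeasurable (fun y => Q y b) (ν.restrict X)) (hQc : ∀ y ∈ X, ∀ b, |Q y b| ≤ c) :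
    Integrable (fun y => p y x a * ⨆ b, Q y b) (ν.restrict X) := by
  simp_rw [mul_comm (p _ x a)]
  exact (h.integrable_density hx a).bdd_mul (AEMeasurable.iSup hQ).aestronglyMeasurable
    (ae_restrict_of_forall_mem h.measurableSet fun y hy => abs_ciSup_le (hQc y hy))

lemma abs_bellmanOp_le (h : LipschitzMDP ν X γ r p R Mr W) (hx : x ∈ X) (a : A)
    (hQc : ∀ y ∈ X, ∀ b, |Q y b| ≤ c) : |bellmanOp (ν.restrict X) γ r p Q x a| ≤ R + γ * c := by
  have hint := h.abs_integral_density_mul_le hx a fun y hy => abs_ciSup_le (hQc y hy)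
  calc |bellmanOp (ν.restrict X) γ r p Q x a|
      ≤ |r x a| + |γ * ∫ y in X, p y x a * ⨆ b, Q y b ∂ν| := abs_add_le _ _
    _ = |r x a| + γ * |∫ y in X, p y x a * ⨆ b, Q y b ∂ν| := by
        rw [abs_mul, abs_of_nonneg h.discount_nonneg]
    _ ≤ R + γ * c :=
        add_le_add (h.abs_reward_le x hx a) (mul_le_mul_of_nonneg_left hint h.discount_nonneg)

lemma abs_bellmanOp_sub_bellmanOp_le (h : LipschitzMDP ν X γ r p R Mr W) (hx : x ∈ X) (a : A)
    (hQ : ∀ b, AEMeasurable (fun y => Q y b) (ν.restrict X)) (hQc : ∀ y ∈ X, ∀ b, |Q y b| ≤ c)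
    (hQ' : ∀ b, AEMeasurable (fun y => Q' y b) (ν.restrict X)) (hQ'c : ∀ y ∈ X, ∀ b, |Q' y b| ≤ c')
    {ε : ℝ} (hε : ∀ y ∈ X, ∀ b, |Q y b - Q' y b| ≤ ε) :
    |bellmanOp (ν.restrict X) γ r p Q x a - bellmanOp (ν.restrict X) γ r p Q' x a| ≤ γ * ε := by
  have hdiff : bellmanOp (ν.restrict X) γ r p Q x a - bellmanOp (ν.restrict X) γ r p Q' x a =
      γ * ∫ y in X, p y x a * ((⨆ b, Q y b) - ⨆ b, Q' y b) ∂ν := by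
    simp only [bellmanOp, mul_sub]
    rw [integral_sub (h.integrable_density_mul_iSup hx a hQ hQc)
      (h.integrable_density_mul_iSup hx a hQ' hQ'c)]
    ring
  rw [hdiff, abs_mul, abs_of_nonneg h.discount_nonneg]
  gcongr
  · exact h.discount_nonneg
  · exact h.abs_integral_density_mul_le hx a fun y hy => abs_ciSup_sub_ciSup_le (hε y hy)

lemma abs_bellmanOp_sub_le_mul_dist (h : LipschitzMDP ν X γ r p R Mr W) (a : A)
    (hx : x ∈ X) (hx' : x' ∈ X)
    (hQ : ∀ b, AEMeasurable (fun y => Q y b) (ν.restrict X)) (hQc : ∀ y ∈ X, ∀ b, |Q y b| ≤ c) :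
    |bellmanOp (ν.restrict X) γ r p Q x a - bellmanOp (ν.restrict X) γ r p Q x' a| ≤
      (Mr + γ * c * ∫ y in X, W y ∂ν) * dist x x' := by
  have hdiff : bellmanOp (ν.restrict X) γ r p Q x a - bellmanOp (ν.restrict X) γ r p Q x' a =
      (r x a - r x' a) + γ * ∫ y in X, (p y x a - p y x' a) * ⨆ b, Q y b ∂ν := by
    simp only [bellmanOp, sub_mul]
    rw [integral_sub (h.integrable_density_mul_iSup hx a hQ hQc)
      (h.integrable_density_mul_iSup hx' a hQ hQc)]
    ring
  have hint : |∫ y in X, (p y x a - p y x' a) * ⨆ b, Q y b ∂ν| ≤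
      c * ∫ y in X, W y * dist x x' ∂ν :=
    abs_integral_mul_le (h.integrableOn_modulus.mul_const _)
      (ae_restrict_of_forall_mem h.measurableSet (h.abs_density_sub_le a x hx x' hx'))
      (ae_restrict_of_forall_mem h.measurableSet fun y hy => abs_ciSup_le (hQc y hy))
  rw [integral_mul_const] at hint
  rw [hdiff]
  calc _ ≤ |r x a - r x' a| + |γ * ∫ y in X, (p y x a - p y x' a) * ⨆ b, Q y b ∂ν| :=
        abs_add_le _ _
    _ = |r x a - r x' a| + γ * |∫ y in X, (p y x a - p y x' a) * ⨆ b, Q y b ∂ν| := by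
        rw [abs_mul, abs_of_nonneg h.discount_nonneg]
    _ ≤ Mr * dist x x' + γ * (c * ((∫ y in X, W y ∂ν) * dist x x')) :=
        add_le_add (h.abs_reward_sub_le a x hx x' hx')
          (mul_le_mul_of_nonneg_left hint h.discount_nonneg)
    _ = _ := by ring

end LipschitzMDP

section ExtendByZero

variable [PseudoMetricSpace S] {X : Set S}

open Classical in
noncomputable def extendByZero (X : Set S) (Q : A → X →ᵇ ℝ) (y : S) (b : A) : ℝ :=
  if hy : y ∈ X then Q b ⟨y, hy⟩ else 0

lemma extendByZero_of_mem (Q : A → X →ᵇ ℝ) {y : S} (hy : y ∈ X) (b : A) :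
    extendByZero X Q y b = Q b ⟨y, hy⟩ :=
  dif_pos hy

open Classical in
lemma measurable_extendByZero [MeasurableSpace S] [OpensMeasurableSpace S] (hX : MeasurableSet X)
    (Q : A → X →ᵇ ℝ) (b : A) : Measurable fun y => extendByZero X Q y b :=
  (Q b).continuous.measurable.dite measurable_const hX

variable [Fintype A]

lemma abs_extendByZero_le (Q : A → X →ᵇ ℝ) (y : S) (b : A) : |extendByZero X Q y b| ≤ ‖Q‖ := by
  by_cases hy : y ∈ X
  · rw [extendByZero_of_mem Q hy, ← Real.norm_eq_abs]
    exact (norm_coe_le_norm _ _).trans (norm_le_pi_norm Q b)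
  · simp [extendByZero, hy]

lemma abs_extendByZero_sub_le (Q Q' : A → X →ᵇ ℝ) (y : S) (b : A) :
    |extendByZero X Q y b - extendByZero X Q' y b| ≤ dist Q Q' := by
  by_cases hy : y ∈ X
  · rw [extendByZero_of_mem Q hy, extendByZero_of_mem Q' hy, ← Real.dist_eq]
    exact (dist_coe_le_dist _).trans (dist_le_pi_dist Q Q' b)
  · simp [extendByZero, hy]

end ExtendByZero

namespace LipschitzMDP

variable [PseudoMetricSpace S] [MeasurableSpace S] [Fintype A] [Nonempty A] {ν : Measure S}
  {X : Set S} {γ R Mr : ℝ} {r : S → A → ℝ} {p : S → S → A → ℝ} {W : S → ℝ} {x x' : S}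
  {Q : S → A → ℝ} {c : ℝ}

noncomputable def bellmanOpBCF (h : LipschitzMDP ν X γ r p R Mr W) (Q : S → A → ℝ)
    (hQ : ∀ b, AEMeasurable (fun y => Q y b) (ν.restrict X)) (hQc : ∀ y ∈ X, ∀ b, |Q y b| ≤ c) :
    A → X →ᵇ ℝ := fun a =>
  .ofNormedAddCommGroup (fun x : X => bellmanOp (ν.restrict X) γ r p Q x a)
    (LipschitzOnWith.of_dist_le' (f := fun x => bellmanOp (ν.restrict X) γ r p Q x a)
      fun x hx x' hx' => by
        rw [Real.dist_eq]
        exact h.abs_bellmanOp_sub_le_mul_dist a hx hx' hQ hQc).continuousOn.domRestrict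
    (R + γ * c) fun x => h.abs_bellmanOp_le x.2 a hQc

lemma bellmanOpBCF_apply (h : LipschitzMDP ν X γ r p R Mr W)
    (hQ : ∀ b, AEMeasurable (fun y => Q y b) (ν.restrict X)) (hQc : ∀ y ∈ X, ∀ b, |Q y b| ≤ c)
    (a : A) (x : X) : h.bellmanOpBCF Q hQ hQc a x = bellmanOp (ν.restrict X) γ r p Q x a :=
  rfl

variable [OpensMeasurableSpace S]

noncomputable def bellmanMap (h : LipschitzMDP ν X γ r p R Mr W) (Q : A → X →ᵇ ℝ) : A → X →ᵇ ℝ :=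
  h.bellmanOpBCF (extendByZero X Q)
    (fun b => (measurable_extendByZero h.measurableSet Q b).aemeasurable)
    fun y _ b => abs_extendByZero_le Q y b

lemma bellmanMap_apply (h : LipschitzMDP ν X γ r p R Mr W) (Q : A → X →ᵇ ℝ) (a : A) (x : X) :
    h.bellmanMap Q a x = bellmanOp (ν.restrict X) γ r p (extendByZero X Q) x a :=
  rfl

lemma norm_bellmanMap_le (h : LipschitzMDP ν X γ r p R Mr W) (hR : 0 ≤ R) (Q : A → X →ᵇ ℝ) :
    ‖h.bellmanMap Q‖ ≤ R + γ * ‖Q‖ := by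
  have hC : 0 ≤ R + γ * ‖Q‖ := add_nonneg hR (mul_nonneg h.discount_nonneg (norm_nonneg Q))
  refine (pi_norm_le_iff_of_nonneg hC).2 fun a => (norm_le hC).2 fun x => ?_
  rw [bellmanMap_apply, Real.norm_eq_abs]
  exact h.abs_bellmanOp_le x.2 a fun y _ b => abs_extendByZero_le Q y b

lemma contractingWith_bellmanMap (h : LipschitzMDP ν X γ r p R Mr W) :
    ContractingWith γ.toNNReal h.bellmanMap := by
  refine ⟨Real.toNNReal_lt_one.2 h.discount_lt_one, .of_dist_le_mul fun Q Q' => ?_⟩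
  have hC : 0 ≤ γ * dist Q Q' := mul_nonneg h.discount_nonneg dist_nonneg
  rw [Real.coe_toNNReal _ h.discount_nonneg, dist_pi_le_iff hC]
  refine fun a => (dist_le hC).2 fun x => ?_
  rw [Real.dist_eq, bellmanMap_apply, bellmanMap_apply]
  exact h.abs_bellmanOp_sub_bellmanOp_le x.2 a
    (fun b => (measurable_extendByZero h.measurableSet Q b).aemeasurable)
    (fun y _ b => abs_extendByZero_le Q y b)
    (fun b => (measurable_extendByZero h.measurableSet Q' b).aemeasurable)
    (fun y _ b => abs_extendByZero_le Q' y b) fun y _ b => abs_extendByZero_sub_le Q Q' y b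

noncomputable def optimalQ (h : LipschitzMDP ν X γ r p R Mr W) : S → A → ℝ :=
  extendByZero X (ContractingWith.fixedPoint h.bellmanMap h.contractingWith_bellmanMap)

lemma measurable_optimalQ (h : LipschitzMDP ν X γ r p R Mr W) (a : A) :
    Measurable fun x => h.optimalQ x a :=
  measurable_extendByZero h.measurableSet _ a

lemma optimalQ_eq_bellmanOp (h : LipschitzMDP ν X γ r p R Mr W) (hx : x ∈ X) (a : A) :
    h.optimalQ x a = bellmanOp (ν.restrict X) γ r p h.optimalQ x a := by
  rw [optimalQ, extendByZero_of_mem _ hx, ← bellmanMap_apply h _ a ⟨x, hx⟩,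
    h.contractingWith_bellmanMap.fixedPoint_isFixedPt.eq]

lemma abs_optimalQ_le (h : LipschitzMDP ν X γ r p R Mr W) (hR : 0 ≤ R) (x : S) (a : A) :
    |h.optimalQ x a| ≤ R / (1 - γ) := by
  set Q := ContractingWith.fixedPoint h.bellmanMap h.contractingWith_bellmanMap
  have hfix : h.bellmanMap Q = Q := h.contractingWith_bellmanMap.fixedPoint_isFixedPt.eq
  have hQ : ‖Q‖ ≤ R + γ * ‖Q‖ := by
    calc ‖Q‖ = ‖h.bellmanMap Q‖ := by rw [hfix]
      _ ≤ R + γ * ‖Q‖ := h.norm_bellmanMap_le hR Q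
  have hxQ : |h.optimalQ x a| ≤ ‖Q‖ := abs_extendByZero_le Q x a
  have hγ : 0 < 1 - γ := sub_pos.2 h.discount_lt_one
  rw [le_div_iff₀ hγ]
  calc |h.optimalQ x a| * (1 - γ) ≤ ‖Q‖ * (1 - γ) := mul_le_mul_of_nonneg_right hxQ hγ.le
    _ ≤ R := by linarith

lemma abs_optimalQ_sub_le_mul_dist (h : LipschitzMDP ν X γ r p R Mr W) (hR : 0 ≤ R) (a : A)
    (hx : x ∈ X) (hx' : x' ∈ X) :
    |h.optimalQ x a - h.optimalQ x' a| ≤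
      (Mr + γ * (R / (1 - γ)) * ∫ y in X, W y ∂ν) * dist x x' := by
  rw [h.optimalQ_eq_bellmanOp hx, h.optimalQ_eq_bellmanOp hx']
  exact h.abs_bellmanOp_sub_le_mul_dist a hx hx' (fun b => (h.measurable_optimalQ b).aemeasurable)
    fun y _ b => h.abs_optimalQ_le hR y b

lemma eq_optimalQ_of_eq_bellmanOp (h : LipschitzMDP ν X γ r p R Mr W)
    (hQ : ∀ b, AEMeasurable (fun y => Q y b) (ν.restrict X)) (hQc : ∀ y ∈ X, ∀ b, |Q y b| ≤ c)
    (hfix : ∀ x ∈ X, ∀ a, Q x a = bellmanOp (ν.restrict X) γ r p Q x a) (hx : x ∈ X) (a : A) :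
    Q x a = h.optimalQ x a := by
  set Q' := h.bellmanOpBCF Q hQ hQc
  have hQ' : ∀ y ∈ X, ∀ b, extendByZero X Q' y b = Q y b := fun y hy b => by
    rw [extendByZero_of_mem _ hy, bellmanOpBCF_apply, ← hfix y hy b]
  have hQ'fix : Function.IsFixedPt h.bellmanMap Q' := by
    funext a; ext x
    rw [bellmanMap_apply, bellmanOp_congr h.measurableSet hQ', bellmanOpBCF_apply]
  rw [optimalQ, extendByZero_of_mem _ hx, ← h.contractingWith_bellmanMap.fixedPoint_unique hQ'fix,
    bellmanOpBCF_apply, ← hfix x hx a]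

end LipschitzMDP

end MarkovDecisionProcess

theorem bellman_fixed_point_bounded_lipschitz_general
    (d : ℕ) (X : Set (EuclideanSpace ℝ (Fin d)))
    (hXne : X.Nonempty) (hXcomp : IsCompact X)
    (A : Type*) [Fintype A] [Nonempty A]
    (γ β Rmax Vmax Mr Mp : ℝ)
    (hγ : γ ∈ Set.Ioo (0:ℝ) 1) (hβ : β = 1 / (1 - γ)) (hVmax : Vmax = β * Rmax)
    (r : EuclideanSpace ℝ (Fin d) → A → ℝ)
    (hr_nonneg : ∀ x ∈ X, ∀ a : A, 0 ≤ r x a)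
    (hr_bdd : ∀ x ∈ X, ∀ a : A, r x a ≤ Rmax)
    (hr_lip : ∀ a : A, ∀ x ∈ X, ∀ x' ∈ X, |r x a - r x' a| ≤ Mr * ‖x - x'‖)
    (p : EuclideanSpace ℝ (Fin d) → EuclideanSpace ℝ (Fin d) → A → ℝ)
    (hp_nonneg : ∀ y ∈ X, ∀ x ∈ X, ∀ a : A, 0 ≤ p y x a)
    (hp_int : ∀ x ∈ X, ∀ a : A, ∫ y in X, p y x a = 1)
    (W : EuclideanSpace ℝ (Fin d) → ℝ)
    (hW_integrable : IntegrableOn W X)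
    (hp_lip : ∀ a : A, ∀ x ∈ X, ∀ x' ∈ X, ∀ y ∈ X,
      |p y x a - p y x' a| ≤ W y * ‖x - x'‖)
    (hW_int : ∫ y in X, W y ≤ Mp) :
    ∃ Qstar : EuclideanSpace ℝ (Fin d) → A → ℝ,
      (∀ a, Measurable fun x => Qstar x a) ∧
      (∀ x ∈ X, ∀ a : A, |Qstar x a| ≤ Vmax) ∧
      (∀ a : A, ∀ x ∈ X, ∀ x' ∈ X,
        |Qstar x a - Qstar x' a| ≤ (Mr + γ * Vmax * Mp) * ‖x - x'‖) ∧
      (∀ x ∈ X, ∀ a : A,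
        Qstar x a = r x a + γ * ∫ y in X, p y x a * ⨆ b : A, Qstar y b) ∧
      (∀ Q : EuclideanSpace ℝ (Fin d) → A → ℝ,
        (∀ a, Measurable fun x => Q x a) →
        (∃ B : ℝ, ∀ x ∈ X, ∀ a : A, |Q x a| ≤ B) →
        (∀ x ∈ X, ∀ a : A,
          Q x a = r x a + γ * ∫ y in X, p y x a * ⨆ b : A, Q y b) →
        ∀ x ∈ X, ∀ a : A, Q x a = Qstar x a) := by
  obtain ⟨hγ0, hγ1⟩ := hγ
  obtain ⟨x₀, hx₀⟩ := hXne
  have hRmax : 0 ≤ Rmax :=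
    (hr_nonneg x₀ hx₀ (Classical.arbitrary A)).trans (hr_bdd x₀ hx₀ (Classical.arbitrary A))
  have hV : Vmax = Rmax / (1 - γ) := by rw [hVmax, hβ]; ring
  have h : LipschitzMDP volume X γ r p Rmax Mr W :=
    { measurableSet := hXcomp.measurableSet
      discount_nonneg := hγ0.le
      discount_lt_one := hγ1
      abs_reward_le := fun x hx a => (abs_of_nonneg (hr_nonneg x hx a)).trans_le (hr_bdd x hx a)
      abs_reward_sub_le := by simpa only [dist_eq_norm] using hr_lip
      density_nonneg := fun x hx a y hy => hp_nonneg y hy x hx a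
      integral_density := hp_int
      integrableOn_modulus := hW_integrable
      abs_density_sub_le := by simpa only [dist_eq_norm] using hp_lip }
  refine ⟨h.optimalQ, h.measurable_optimalQ, fun x _ a => hV ▸ h.abs_optimalQ_le hRmax x a,
    fun a x hx x' hx' => ?_, fun x hx a => h.optimalQ_eq_bellmanOp hx a,
    fun Q hQ ⟨B, hQB⟩ hfix x hx a =>
      h.eq_optimalQ_of_eq_bellmanOp (fun b => (hQ b).aemeasurable) hQB hfix hx a⟩
  have hγV : 0 ≤ γ * Vmax := mul_nonneg hγ0.le (hV ▸ div_nonneg hRmax (by linarith))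
  calc |h.optimalQ x a - h.optimalQ x' a|
      ≤ (Mr + γ * Vmax * ∫ y in X, W y) * ‖x - x'‖ := by
        simpa only [hV, dist_eq_norm] using h.abs_optimalQ_sub_le_mul_dist hRmax a hx hx'
    _ ≤ (Mr + γ * Vmax * Mp) * ‖x - x'‖ := by gcongr

/-- Under the MDP regularity assumptions, the Bellman optimality operator has a unique
bounded measurable fixed point `Q*`, which is bounded by `V_max` and Lipschitz with
constant `M_r + γ V_max M_p` in the state variable. -/
theorem bellman_fixed_point_bounded_lipschitz
    (d : ℕ) (X : Set (EuclideanSpace ℝ (Fin d)))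
    (hXne : X.Nonempty) (hXcomp : IsCompact X)
    (A : Type*) [Fintype A] [Nonempty A]
    (γ β Rmax Vmax Mr Mp : ℝ)
    (hγ : γ ∈ Set.Ioo (0:ℝ) 1) (hβ : β = 1 / (1 - γ)) (hVmax : Vmax = β * Rmax)
    (r : EuclideanSpace ℝ (Fin d) → A → ℝ)
    (hr_meas : ∀ a, Measurable fun x => r x a)
    (hr_nonneg : ∀ x ∈ X, ∀ a : A, 0 ≤ r x a)
    (hr_bdd : ∀ x ∈ X, ∀ a : A, r x a ≤ Rmax)
    (hr_lip : ∀ a : A, ∀ x ∈ X, ∀ x' ∈ X, |r x a - r x' a| ≤ Mr * ‖x - x'‖)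
    (p : EuclideanSpace ℝ (Fin d) → EuclideanSpace ℝ (Fin d) → A → ℝ)
    (hp_meas : ∀ x ∈ X, ∀ a : A, Measurable fun y => p y x a)
    (hp_nonneg : ∀ y ∈ X, ∀ x ∈ X, ∀ a : A, 0 ≤ p y x a)
    (hp_int : ∀ x ∈ X, ∀ a : A, ∫ y in X, p y x a = 1)
    (W : EuclideanSpace ℝ (Fin d) → ℝ)
    (hW_meas : Measurable W) (hW_nonneg : ∀ y ∈ X, 0 ≤ W y)
    (hW_integrable : IntegrableOn W X)
    (hp_lip : ∀ a : A, ∀ x ∈ X, ∀ x' ∈ X, ∀ y ∈ X,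
      |p y x a - p y x' a| ≤ W y * ‖x - x'‖)
    (hW_int : ∫ y in X, W y ≤ Mp) :
    ∃ Qstar : EuclideanSpace ℝ (Fin d) → A → ℝ,
      (∀ a, Measurable fun x => Qstar x a) ∧
      (∀ x ∈ X, ∀ a : A, |Qstar x a| ≤ Vmax) ∧
      (∀ a : A, ∀ x ∈ X, ∀ x' ∈ X,
        |Qstar x a - Qstar x' a| ≤ (Mr + γ * Vmax * Mp) * ‖x - x'‖) ∧
      (∀ x ∈ X, ∀ a : A,
        Qstar x a = r x a + γ * ∫ y in X, p y x a * ⨆ b : A, Qstar y b) ∧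
      (∀ Q : EuclideanSpace ℝ (Fin d) → A → ℝ,
        (∀ a, Measurable fun x => Q x a) →
        (∃ B : ℝ, ∀ x ∈ X, ∀ a : A, |Q x a| ≤ B) →
        (∀ x ∈ X, ∀ a : A,
          Q x a = r x a + γ * ∫ y in X, p y x a * ⨆ b : A, Q y b) →
        ∀ x ∈ X, ∀ a : A, Q x a = Qstar x a) :=
  bellman_fixed_point_bounded_lipschitz_general d X hXne hXcomp A γ β Rmax Vmax Mr Mp hγ hβ hVmax r
    hr_nonneg hr_bdd hr_lip p hp_nonneg hp_int W hW_integrable hp_lip hW_int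
end

section
/- Under the MDP regularity assumptions, for every bounded measurable u : X × A → ℝ and every a ∈ A, the function x ↦ (Fu)(x,a) is Lipschitz on X with Lipschitz constant M_r + γ ‖u‖_∞ M_p; i.e., |(Fu)(x,a) − (Fu)(x',a)| ≤ (M_r + γ‖u‖_∞ M_p)‖x−x'‖ for all x, x' ∈ X. -/
/-!
The reward term contributes `M_r ‖x - x'‖` directly. For the expectation term, subtract the two
integrals under one integral sign: the integrand `(p(y|x,a) - p(y|x',a)) · max_b u(y,b)` is bounded
by `W_p(y) ‖x - x'‖ · ‖u‖_∞`, and integrating `W_p` gives at most `M_p`. The densities are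
integrable because their integral is `1`, not the junk value `0`.
-/

open MeasureTheory

lemma abs_iSup_le_of_forall_abs_le {ι : Type*} [Finite ι] [Nonempty ι] {f : ι → ℝ} {U : ℝ}
    (h : ∀ i, |f i| ≤ U) : |⨆ i, f i| ≤ U := by
  obtain ⟨i⟩ := ‹Nonempty ι›
  refine abs_le.2 ⟨?_, ciSup_le fun j => (abs_le.1 (h j)).2⟩
  exact (abs_le.1 (h i)).1.trans (le_ciSup (Set.finite_range f).bddAbove i)

lemma abs_integral_mul_sub_integral_mul_le {α : Type*} [MeasurableSpace α] {μ : Measure α}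
    {f₁ f₂ g W : α → ℝ} {U c : ℝ} (hf₁ : Integrable f₁ μ) (hf₂ : Integrable f₂ μ)
    (hg : AEStronglyMeasurable g μ) (hgU : ∀ᵐ y ∂μ, |g y| ≤ U) (hW : Integrable W μ)
    (hfW : ∀ᵐ y ∂μ, |f₁ y - f₂ y| ≤ W y * c) :
    |∫ y, f₁ y * g y ∂μ - ∫ y, f₂ y * g y ∂μ| ≤ U * c * ∫ y, W y ∂μ := by
  have h₁ : Integrable (fun y => f₁ y * g y) μ := hf₁.mul_bdd hg hgU
  have h₂ : Integrable (fun y => f₂ y * g y) μ := hf₂.mul_bdd hg hgU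
  rw [← integral_sub h₁ h₂, ← integral_const_mul, ← Real.norm_eq_abs]
  refine norm_integral_le_of_norm_le (hW.const_mul _) ?_
  filter_upwards [hgU, hfW] with y hgy hfy
  calc ‖f₁ y * g y - f₂ y * g y‖ = |f₁ y - f₂ y| * |g y| := by
        rw [Real.norm_eq_abs, ← sub_mul, abs_mul]
    _ ≤ W y * c * U := mul_le_mul hfy hgy (abs_nonneg _) ((abs_nonneg _).trans hfy)
    _ = U * c * W y := by ring

theorem bellman_operator_lipschitz_general
    (d : ℕ) (X : Set (EuclideanSpace ℝ (Fin d)))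
    (hXcomp : IsCompact X)
    (A : Type*) [Fintype A]
    (γ Mr Mp : ℝ) (hγ : γ ∈ Set.Ioo (0:ℝ) 1)
    (r : EuclideanSpace ℝ (Fin d) → A → ℝ)
    (hr_lip : ∀ a : A, ∀ x ∈ X, ∀ x' ∈ X, |r x a - r x' a| ≤ Mr * ‖x - x'‖)
    (p : EuclideanSpace ℝ (Fin d) → EuclideanSpace ℝ (Fin d) → A → ℝ)
    (hp_int : ∀ x ∈ X, ∀ a : A, ∫ y in X, p y x a = 1)
    (W : EuclideanSpace ℝ (Fin d) → ℝ)
    (hW_integrable : IntegrableOn W X)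
    (hp_lip : ∀ a : A, ∀ x ∈ X, ∀ x' ∈ X, ∀ y ∈ X,
      |p y x a - p y x' a| ≤ W y * ‖x - x'‖)
    (hW_int : ∫ y in X, W y ≤ Mp)
    (u : EuclideanSpace ℝ (Fin d) → A → ℝ)
    (hu_meas : ∀ a, Measurable fun x => u x a)
    (U : ℝ) (hu_bdd : ∀ x ∈ X, ∀ a : A, |u x a| ≤ U) :
    ∀ a : A, ∀ x ∈ X, ∀ x' ∈ X,
      |(r x a + γ * ∫ y in X, p y x a * ⨆ b : A, u y b) -
        (r x' a + γ * ∫ y in X, p y x' a * ⨆ b : A, u y b)|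
      ≤ (Mr + γ * U * Mp) * ‖x - x'‖ := by
  intro a x hx x' hx'
  have : Nonempty A := ⟨a⟩
  have hX : MeasurableSet X := hXcomp.measurableSet
  have hγ0 : 0 ≤ γ := hγ.1.le
  have hU : 0 ≤ U := (abs_nonneg _).trans (hu_bdd x hx a)
  have hp_integrable (z : EuclideanSpace ℝ (Fin d)) (hz : z ∈ X) :
      IntegrableOn (fun y => p y z a) X :=
    .of_integral_ne_zero (by rw [hp_int z hz a]; exact one_ne_zero)
  have hexp := abs_integral_mul_sub_integral_mul_le (hp_integrable x hx) (hp_integrable x' hx')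
    (Measurable.iSup hu_meas).aestronglyMeasurable
    (ae_restrict_of_forall_mem hX fun y hy => abs_iSup_le_of_forall_abs_le (hu_bdd y hy))
    hW_integrable (ae_restrict_of_forall_mem hX (hp_lip a x hx x' hx'))
  calc _ = |(r x a - r x' a) + γ * ((∫ y in X, p y x a * ⨆ b : A, u y b) -
          ∫ y in X, p y x' a * ⨆ b : A, u y b)| := by ring_nf
    _ ≤ |r x a - r x' a| + γ * |(∫ y in X, p y x a * ⨆ b : A, u y b) -
          ∫ y in X, p y x' a * ⨆ b : A, u y b| :=
        (abs_add_le _ _).trans_eq (by rw [abs_mul, abs_of_nonneg hγ0])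
    _ ≤ Mr * ‖x - x'‖ + γ * (U * ‖x - x'‖ * Mp) := by
        gcongr
        · exact hr_lip a x hx x' hx'
        · exact hexp.trans (by gcongr)
    _ = (Mr + γ * U * Mp) * ‖x - x'‖ := by ring

/-- Lipschitz continuity of the Bellman update: for bounded measurable `u`,
`x ↦ (Fu)(x,a)` is Lipschitz with constant `M_r + γ ‖u‖_∞ M_p`. -/
theorem bellman_operator_lipschitz
    (d : ℕ) (X : Set (EuclideanSpace ℝ (Fin d)))
    (hXne : X.Nonempty) (hXcomp : IsCompact X)
    (A : Type*) [Fintype A] [Nonempty A]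
    (γ Mr Mp : ℝ) (hγ : γ ∈ Set.Ioo (0:ℝ) 1)
    (r : EuclideanSpace ℝ (Fin d) → A → ℝ)
    (hr_meas : ∀ a, Measurable fun x => r x a)
    (hr_lip : ∀ a : A, ∀ x ∈ X, ∀ x' ∈ X, |r x a - r x' a| ≤ Mr * ‖x - x'‖)
    (p : EuclideanSpace ℝ (Fin d) → EuclideanSpace ℝ (Fin d) → A → ℝ)
    (hp_meas : ∀ x ∈ X, ∀ a : A, Measurable fun y => p y x a)
    (hp_nonneg : ∀ y ∈ X, ∀ x ∈ X, ∀ a : A, 0 ≤ p y x a)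
    (hp_int : ∀ x ∈ X, ∀ a : A, ∫ y in X, p y x a = 1)
    (W : EuclideanSpace ℝ (Fin d) → ℝ)
    (hW_meas : Measurable W) (hW_nonneg : ∀ y ∈ X, 0 ≤ W y)
    (hW_integrable : IntegrableOn W X)
    (hp_lip : ∀ a : A, ∀ x ∈ X, ∀ x' ∈ X, ∀ y ∈ X,
      |p y x a - p y x' a| ≤ W y * ‖x - x'‖)
    (hW_int : ∫ y in X, W y ≤ Mp)
    (u : EuclideanSpace ℝ (Fin d) → A → ℝ)
    (hu_meas : ∀ a, Measurable fun x => u x a)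
    (U : ℝ) (hu_bdd : ∀ x ∈ X, ∀ a : A, |u x a| ≤ U) :
    ∀ a : A, ∀ x ∈ X, ∀ x' ∈ X,
      |(r x a + γ * ∫ y in X, p y x a * ⨆ b : A, u y b) -
        (r x' a + γ * ∫ y in X, p y x' a * ⨆ b : A, u y b)|
      ≤ (Mr + γ * U * Mp) * ‖x - x'‖ :=
  bellman_operator_lipschitz_general d X hXcomp A γ Mr Mp hγ r hr_lip p hp_int W hW_integrable
    hp_lip hW_int u hu_meas U hu_bdd
end

section
/- Let (F_t)_{t≥0} be a filtration on a probability space, and let (w̄_j)_{j≥1} be real random variables such that w̄_j is F_j-measurable, E[w̄_{j+1} | F_j] = 0 almost surely for all j ≥ 0, and |w̄_j| ≤ M almost surely with M > 0. Let β > 1 and for t ≥ 1 define u^t = Σ_{j=1}^{t} η^{t,j} w̄_j where the deterministic weights satisfy 0 ≤ η^{t,j} ≤ β/t for all 1 ≤ j ≤ t. Then for every ε with 0 < ε ≤ Mβ and every integer T₁ ≥ 1, P(there exists t ≥ T₁ with |u^t| > ε) ≤ (8M²β²/ε²) exp(−T₁ ε² / (2M²β²)). -/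
open MeasureTheory Real

/-- Conditional Hoeffding's lemma. -/
lemma cond_hoeffding {Ω : Type*} {m0 : MeasurableSpace Ω} {μ : Measure Ω}
    [IsProbabilityMeasure μ] {m : MeasurableSpace Ω} (hm : m ≤ m0) {Y : Ω → ℝ} {c : ℝ}
    (hc : 0 < c) (hmeas : AEStronglyMeasurable[m0] Y μ)
    (hcond : μ[Y|m] =ᵐ[μ] 0) (hbdd : ∀ᵐ ω ∂μ, |Y ω| ≤ c) (s : ℝ) :
    μ[fun ω => Real.exp (s * Y ω)|m] ≤ᵐ[μ] fun _ => Real.exp (s ^ 2 * c ^ 2 / 2) := by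
  have hYint : Integrable Y μ := by
    refine Integrable.mono' (integrable_const c) hmeas ?_
    filter_upwards [hbdd] with ω h using by simpa using h
  set g : Ω → ℝ := (fun _ => Real.cosh (s * c)) + (Real.sinh (s * c) / c) • Y with hg
  -- pointwise convexity bound
  have hpt : ∀ᵐ ω ∂μ, Real.exp (s * Y ω) ≤ g ω := by
    filter_upwards [hbdd] with ω h
    have hy1 : -c ≤ Y ω := (abs_le.1 h).1
    have hy2 : Y ω ≤ c := (abs_le.1 h).2
    have hθ : 0 ≤ (c - Y ω) / (2 * c) := div_nonneg (by linarith) (by linarith)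
    have hθ' : 0 ≤ (c + Y ω) / (2 * c) := div_nonneg (by linarith) (by linarith)
    have hsum : (c - Y ω) / (2 * c) + (c + Y ω) / (2 * c) = 1 := by
      field_simp
      ring
    have hconv := convexOn_exp.2 (Set.mem_univ (-(s * c))) (Set.mem_univ (s * c))
      hθ hθ' hsum
    have harg : ((c - Y ω) / (2 * c)) • (-(s * c)) + ((c + Y ω) / (2 * c)) • (s * c)
        = s * Y ω := by
      rw [smul_eq_mul, smul_eq_mul]
      field_simp
      ring
    rw [harg] at hconv
    simp only [smul_eq_mul] at hconv
    refine hconv.trans (le_of_eq ?_)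
    simp only [hg, Pi.add_apply, Pi.smul_apply, smul_eq_mul]
    rw [Real.cosh_eq, Real.sinh_eq]
    field_simp
    ring
  have hIexp : Integrable (fun ω => Real.exp (s * Y ω)) μ := by
    refine Integrable.mono' (integrable_const (Real.exp (|s| * c)))
      (Real.continuous_exp.comp_aestronglyMeasurable (hmeas.const_mul s)) ?_
    filter_upwards [hbdd] with ω h
    rw [Real.norm_eq_abs, abs_of_pos (Real.exp_pos _), Real.exp_le_exp]
    calc s * Y ω ≤ |s * Y ω| := le_abs_self _
      _ = |s| * |Y ω| := abs_mul _ _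
      _ ≤ |s| * c := by gcongr
  have hIg : Integrable g μ := (integrable_const _).add (hYint.smul _)
  have h1 : μ[fun ω => Real.exp (s * Y ω)|m] ≤ᵐ[μ] μ[g|m] :=
    condExp_mono hIexp hIg hpt
  have h2 : μ[g|m] =ᵐ[μ] fun _ => Real.cosh (s * c) := by
    have hadd := condExp_add (μ := μ) (m := m) (integrable_const (Real.cosh (s * c)))
      (hYint.smul (Real.sinh (s * c) / c))
    have hsmul := condExp_smul (μ := μ) (m := m) (Real.sinh (s * c) / c) Y
    have hcst : μ[(fun _ : Ω => Real.cosh (s * c))|m] = fun _ => Real.cosh (s * c) :=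
      condExp_const hm _
    filter_upwards [hadd, hsmul, hcond] with ω ha hs hc0
    show (μ[(fun _ : Ω => Real.cosh (s * c)) + (Real.sinh (s * c) / c) • Y|m]) ω = _
    rw [ha, Pi.add_apply, hcst, hs, Pi.smul_apply, hc0]
    simp
  have h3 : Real.cosh (s * c) ≤ Real.exp (s ^ 2 * c ^ 2 / 2) := by
    have := Real.cosh_le_exp_half_sq (s * c)
    rwa [mul_pow] at this
  filter_upwards [h1, h2] with ω e1 e2
  exact (e1.trans_eq e2).trans h3

open MeasureTheory Real

section

variable {Ω : Type*} {m0 : MeasurableSpace Ω} {μ : Measure Ω} [IsProbabilityMeasure μ]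
  (ℱ : Filtration ℕ m0) (w : ℕ → Ω → ℝ) (M : ℝ)

/-- a.e. bound and measurability for partial weighted sums. -/
lemma sum_meas_bdd (hw_meas : ∀ j, 1 ≤ j → StronglyMeasurable[ℱ j] (w j))
    (hw_bdd : ∀ j, ∀ᵐ ω ∂μ, |w j ω| ≤ M)
    (a : ℕ → ℝ) (K : ℝ) (ha : ∀ j, |a j| ≤ K) (t : ℕ) :
    StronglyMeasurable[ℱ t] (fun ω => ∑ j ∈ Finset.Icc 1 t, a j * w j ω) ∧
      (∀ᵐ ω ∂μ, |∑ j ∈ Finset.Icc 1 t, a j * w j ω| ≤ t * (K * M)) := by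
  constructor
  · refine Finset.stronglyMeasurable_fun_sum _ fun j hj => ?_
    simp only [Finset.mem_Icc] at hj
    exact (((hw_meas j hj.1).mono (ℱ.mono hj.2)).const_mul (a j))
  · have hall : ∀ᵐ ω ∂μ, ∀ j, |w j ω| ≤ M := ae_all_iff.2 hw_bdd
    filter_upwards [hall] with ω h
    calc |∑ j ∈ Finset.Icc 1 t, a j * w j ω| ≤ ∑ j ∈ Finset.Icc 1 t, |a j * w j ω| :=
          Finset.abs_sum_le_sum_abs _ _
      _ ≤ ∑ _j ∈ Finset.Icc 1 t, K * M := by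
          refine Finset.sum_le_sum fun j _ => ?_
          rw [abs_mul]
          have h0 : (0:ℝ) ≤ |a j| := abs_nonneg _
          have hM0 : (0:ℝ) ≤ M := ((abs_nonneg _).trans (h j))
          exact mul_le_mul (ha j) (h j) (abs_nonneg _) ((h0.trans (ha j)))
      _ ≤ t * (K * M) := by
          rw [Finset.sum_const, Nat.card_Icc]
          simp only [nsmul_eq_mul]
          have : ((t + 1 - 1 : ℕ) : ℝ) ≤ (t : ℕ) := by simp
          have hKM : (0:ℝ) ≤ K * M := by
            rcases (Finset.Icc 1 t).eq_empty_or_nonempty with he | he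
            · by_cases h0 : (0:ℝ) ≤ K * M
              · exact h0
              · push_neg at h0
                nlinarith [abs_nonneg (a 0), ha 0, abs_nonneg (w 0 ω), h 0]
            · nlinarith [abs_nonneg (a 0), ha 0, abs_nonneg (w 0 ω), h 0]
          gcongr

/-- Azuma mgf bound. -/
lemma azuma_mgf (hM : 0 < M)
    (hw_meas : ∀ j, 1 ≤ j → StronglyMeasurable[ℱ j] (w j))
    (hw_cond : ∀ j : ℕ, μ[w (j + 1) | ℱ j] =ᵐ[μ] 0)
    (hw_bdd : ∀ j, ∀ᵐ ω ∂μ, |w j ω| ≤ M)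
    (a : ℕ → ℝ) (K : ℝ) (hK : 0 < K) (ha : ∀ j, |a j| ≤ K) (lam : ℝ) (t : ℕ) :
    Integrable (fun ω => Real.exp (lam * ∑ j ∈ Finset.Icc 1 t, a j * w j ω)) μ ∧
      ∫ ω, Real.exp (lam * ∑ j ∈ Finset.Icc 1 t, a j * w j ω) ∂μ
        ≤ Real.exp (t * (lam ^ 2 * (K * M) ^ 2 / 2)) := by
  have hint : ∀ s : ℕ, Integrable (fun ω => Real.exp (lam * ∑ j ∈ Finset.Icc 1 s, a j * w j ω)) μ := by
    intro s
    obtain ⟨hmeas, hbdd⟩ := sum_meas_bdd ℱ w M hw_meas hw_bdd a K ha s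
    refine Integrable.mono' (integrable_const (Real.exp (|lam| * (s * (K * M)))))
      (Real.continuous_exp.comp_aestronglyMeasurable
        (((hmeas.mono (ℱ.le s)).aestronglyMeasurable).const_mul lam)) ?_
    filter_upwards [hbdd] with ω h
    rw [Real.norm_eq_abs, abs_of_pos (Real.exp_pos _), Real.exp_le_exp]
    calc lam * _ ≤ |lam * _| := le_abs_self _
      _ = |lam| * |_| := abs_mul _ _
      _ ≤ |lam| * (s * (K * M)) := by gcongr
  induction t with
  | zero =>
    refine ⟨hint 0, ?_⟩
    simp
  | succ t ih =>
    refine ⟨hint (t + 1), ?_⟩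
    obtain ⟨hSmeas, hSbdd⟩ := sum_meas_bdd ℱ w M hw_meas hw_bdd a K ha t
    set S : Ω → ℝ := fun ω => ∑ j ∈ Finset.Icc 1 t, a j * w j ω with hS
    set Y : Ω → ℝ := fun ω => a (t + 1) * w (t + 1) ω with hY
    have hsplit : ∀ ω, (∑ j ∈ Finset.Icc 1 (t + 1), a j * w j ω) = S ω + Y ω := by
      intro ω
      rw [hS, hY]
      exact Finset.sum_Icc_succ_top (Nat.one_le_iff_ne_zero.2 (Nat.succ_ne_zero t)) _
    -- conditional Hoeffding for Y
    have hYmeas : AEStronglyMeasurable Y μ :=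
      (((hw_meas (t + 1) (Nat.le_add_left 1 t)).mono (ℱ.le (t + 1))).const_mul
        (a (t + 1))).aestronglyMeasurable
    have hYcond : μ[Y|ℱ t] =ᵐ[μ] 0 := by
      have hsmul := condExp_smul (μ := μ) (m := ℱ t) (a (t + 1)) (w (t + 1))
      have : Y = (a (t + 1)) • (w (t + 1)) := by ext ω; simp [hY]
      rw [this]
      filter_upwards [hsmul, hw_cond t] with ω h1 h2
      rw [h1, Pi.smul_apply, h2]
      simp
    have hYbdd : ∀ᵐ ω ∂μ, |Y ω| ≤ K * M := by
      filter_upwards [hw_bdd (t + 1)] with ω h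
      rw [hY, abs_mul]
      exact mul_le_mul (ha (t+1)) h (abs_nonneg _) ((abs_nonneg (a (t+1))).trans (ha (t+1)))
    have hch := cond_hoeffding (ℱ.le t) (mul_pos hK hM) hYmeas hYcond hYbdd lam
    -- exp(lam * S) data
    have hexpS_meas : StronglyMeasurable[ℱ t] (fun ω => Real.exp (lam * S ω)) :=
      Real.continuous_exp.comp_stronglyMeasurable (hSmeas.const_mul lam)
    have hexpS_bdd : ∀ᵐ ω ∂μ, ‖Real.exp (lam * S ω)‖ ≤ Real.exp (|lam| * (t * (K * M))) := by
      filter_upwards [hSbdd] with ω h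
      rw [Real.norm_eq_abs, abs_of_pos (Real.exp_pos _), Real.exp_le_exp]
      calc lam * S ω ≤ |lam * S ω| := le_abs_self _
        _ = |lam| * |S ω| := abs_mul _ _
        _ ≤ |lam| * (t * (K * M)) := by gcongr
    have hexpS_int : Integrable (fun ω => Real.exp (lam * S ω)) μ := hint t
    have hexpY_int : Integrable (fun ω => Real.exp (lam * Y ω)) μ := by
      refine Integrable.mono' (integrable_const (Real.exp (|lam| * (K * M))))
        (Real.continuous_exp.comp_aestronglyMeasurable (hYmeas.const_mul lam)) ?_
      filter_upwards [hYbdd] with ω h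
      rw [Real.norm_eq_abs, abs_of_pos (Real.exp_pos _), Real.exp_le_exp]
      calc lam * Y ω ≤ |lam * Y ω| := le_abs_self _
        _ = |lam| * |Y ω| := abs_mul _ _
        _ ≤ |lam| * (K * M) := by gcongr
    -- the product function
    have hprod : (fun ω => Real.exp (lam * ∑ j ∈ Finset.Icc 1 (t + 1), a j * w j ω))
        = (fun ω => Real.exp (lam * S ω)) * (fun ω => Real.exp (lam * Y ω)) := by
      ext ω
      simp only [Pi.mul_apply, hsplit ω, mul_add, Real.exp_add]
    have hpull : μ[(fun ω => Real.exp (lam * S ω)) * (fun ω => Real.exp (lam * Y ω))|ℱ t]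
        =ᵐ[μ] (fun ω => Real.exp (lam * S ω)) * μ[fun ω => Real.exp (lam * Y ω)|ℱ t] :=
      condExp_stronglyMeasurable_mul_of_bound (ℱ.le t) hexpS_meas hexpY_int _ hexpS_bdd
    have hcnonneg : 0 ≤ᵐ[μ] μ[fun ω => Real.exp (lam * Y ω)|ℱ t] :=
      condExp_nonneg (Filter.Eventually.of_forall fun ω => (Real.exp_pos _).le)
    set C := Real.exp (lam ^ 2 * (K * M) ^ 2 / 2) with hCdef
    calc ∫ ω, Real.exp (lam * ∑ j ∈ Finset.Icc 1 (t + 1), a j * w j ω) ∂μ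
        = ∫ ω, (μ[(fun ω => Real.exp (lam * S ω)) * (fun ω => Real.exp (lam * Y ω))|ℱ t]) ω ∂μ := by
          rw [integral_condExp (ℱ.le t)]
          · exact integral_congr_ae (Filter.Eventually.of_forall fun ω => by
              rw [hprod])
      _ ≤ ∫ ω, Real.exp (lam * S ω) * C ∂μ := by
          refine integral_mono_ae ?_ (hexpS_int.mul_const C) ?_
          · exact integrable_condExp
          · filter_upwards [hpull, hch, hcnonneg] with ω h1 h2 h3
            rw [h1, Pi.mul_apply]
            exact mul_le_mul_of_nonneg_left h2 (Real.exp_pos _).le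
      _ = (∫ ω, Real.exp (lam * S ω) ∂μ) * C := integral_mul_const _ _
      _ ≤ Real.exp (t * (lam ^ 2 * (K * M) ^ 2 / 2)) * C := by
          exact mul_le_mul_of_nonneg_right ih.2 (Real.exp_pos _).le
      _ = Real.exp ((t + 1 : ℕ) * (lam ^ 2 * (K * M) ^ 2 / 2)) := by
          rw [hCdef, ← Real.exp_add]
          congr 1
          push_cast
          ring
end
lemma one_sided_tail {Ω : Type*} {m0 : MeasurableSpace Ω} {μ : Measure Ω}
    [IsProbabilityMeasure μ] (ℱ : Filtration ℕ m0) (w : ℕ → Ω → ℝ) (M β : ℝ)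
    (hM : 0 < M) (hβ : 1 < β)
    (hw_meas : ∀ j, 1 ≤ j → StronglyMeasurable[ℱ j] (w j))
    (hw_cond : ∀ j : ℕ, μ[w (j + 1) | ℱ j] =ᵐ[μ] 0)
    (hw_bdd : ∀ j, ∀ᵐ ω ∂μ, |w j ω| ≤ M)
    (a : ℕ → ℝ) (t : ℕ) (ht : 1 ≤ t) (ha : ∀ j, |a j| ≤ β / t)
    (ε : ℝ) (hε0 : 0 < ε) :
    μ {ω | ε ≤ ∑ j ∈ Finset.Icc 1 t, a j * w j ω}
      ≤ ENNReal.ofReal (Real.exp (-((t : ℝ) * ε ^ 2) / (2 * M ^ 2 * β ^ 2))) := by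
  have hβ0 : (0:ℝ) < β := lt_trans one_pos hβ
  have ht0 : (0:ℝ) < (t : ℝ) := by exact_mod_cast ht
  set lam : ℝ := ε * t / (M ^ 2 * β ^ 2) with hlam
  have hlam0 : 0 ≤ lam := by positivity
  set K : ℝ := β / t with hKdef
  have hK : 0 < K := by positivity
  obtain ⟨hint, hmgf⟩ := azuma_mgf ℱ w M hM hw_meas hw_cond hw_bdd a K hK ha lam t
  have hchern := ProbabilityTheory.measure_ge_le_exp_mul_mgf
    (X := fun ω => ∑ j ∈ Finset.Icc 1 t, a j * w j ω) (μ := μ) (t := lam) ε hlam0 hint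
  have hmgf' : ProbabilityTheory.mgf (fun ω => ∑ j ∈ Finset.Icc 1 t, a j * w j ω) μ lam
      ≤ Real.exp ((t : ℝ) * (lam ^ 2 * (K * M) ^ 2 / 2)) := hmgf
  have key : (μ {ω | ε ≤ ∑ j ∈ Finset.Icc 1 t, a j * w j ω}).toReal
      ≤ Real.exp (-((t : ℝ) * ε ^ 2) / (2 * M ^ 2 * β ^ 2)) := by
    refine hchern.trans ?_
    calc Real.exp (-lam * ε) * ProbabilityTheory.mgf _ μ lam
        ≤ Real.exp (-lam * ε) * Real.exp ((t : ℝ) * (lam ^ 2 * (K * M) ^ 2 / 2)) := by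
          exact mul_le_mul_of_nonneg_left hmgf' (Real.exp_pos _).le
      _ = Real.exp (-lam * ε + (t : ℝ) * (lam ^ 2 * (K * M) ^ 2 / 2)) :=
          (Real.exp_add _ _).symm
      _ = Real.exp (-((t : ℝ) * ε ^ 2) / (2 * M ^ 2 * β ^ 2)) := by
          congr 1
          rw [hlam, hKdef]
          field_simp
          ring
  rw [← ENNReal.ofReal_toReal (measure_ne_top μ _)]
  exact ENNReal.ofReal_le_ofReal key

lemma two_sided_tail {Ω : Type*} {m0 : MeasurableSpace Ω} {μ : Measure Ω}
    [IsProbabilityMeasure μ] (ℱ : Filtration ℕ m0) (w : ℕ → Ω → ℝ) (M β : ℝ)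
    (hM : 0 < M) (hβ : 1 < β)
    (hw_meas : ∀ j, 1 ≤ j → StronglyMeasurable[ℱ j] (w j))
    (hw_cond : ∀ j : ℕ, μ[w (j + 1) | ℱ j] =ᵐ[μ] 0)
    (hw_bdd : ∀ j, ∀ᵐ ω ∂μ, |w j ω| ≤ M)
    (η : ℕ → ℕ → ℝ)
    (hη : ∀ t, 1 ≤ t → ∀ j, 1 ≤ j → j ≤ t → 0 ≤ η t j ∧ η t j ≤ β / t)
    (ε : ℝ) (hε0 : 0 < ε) (t : ℕ) (ht : 1 ≤ t) :
    μ {ω | ε < |∑ j ∈ Finset.Icc 1 t, η t j * w j ω|}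
      ≤ ENNReal.ofReal (2 * Real.exp (-((t : ℝ) * ε ^ 2) / (2 * M ^ 2 * β ^ 2))) := by
  have hβ0 : (0:ℝ) < β := lt_trans one_pos hβ
  have ht0 : (0:ℝ) < (t : ℝ) := by exact_mod_cast ht
  classical
  set a : ℕ → ℝ := fun j => if 1 ≤ j ∧ j ≤ t then η t j else 0 with hadef
  have hsum : ∀ ω, (∑ j ∈ Finset.Icc 1 t, η t j * w j ω)
      = ∑ j ∈ Finset.Icc 1 t, a j * w j ω := by
    intro ω
    refine Finset.sum_congr rfl fun j hj => ?_
    simp only [Finset.mem_Icc] at hj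
    simp [hadef, hj.1, hj.2]
  have haK : ∀ j, |a j| ≤ β / t := by
    intro j
    by_cases h : 1 ≤ j ∧ j ≤ t
    · simp only [hadef, h, and_self, if_true]
      rw [abs_of_nonneg (hη t ht j h.1 h.2).1]
      exact (hη t ht j h.1 h.2).2
    · have h0 : a j = 0 := by simp [hadef, h]
      rw [h0, abs_zero]
      positivity
  have haK' : ∀ j, |(-a j)| ≤ β / t := fun j => by rw [abs_neg]; exact haK j
  have hsub : {ω | ε < |∑ j ∈ Finset.Icc 1 t, η t j * w j ω|}
      ⊆ {ω | ε ≤ ∑ j ∈ Finset.Icc 1 t, a j * w j ω}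
        ∪ {ω | ε ≤ ∑ j ∈ Finset.Icc 1 t, (-a j) * w j ω} := by
    intro ω hω
    simp only [Set.mem_setOf_eq] at hω
    rw [hsum ω] at hω
    rcases lt_abs.1 hω with h | h
    · exact Or.inl h.le
    · refine Or.inr ?_
      have : (∑ j ∈ Finset.Icc 1 t, (-a j) * w j ω)
          = -∑ j ∈ Finset.Icc 1 t, a j * w j ω := by
        rw [← Finset.sum_neg_distrib]
        exact Finset.sum_congr rfl fun j _ => by ring
      rw [Set.mem_setOf_eq, this]
      exact h.le
  calc μ {ω | ε < |∑ j ∈ Finset.Icc 1 t, η t j * w j ω|}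
      ≤ μ ({ω | ε ≤ ∑ j ∈ Finset.Icc 1 t, a j * w j ω}
          ∪ {ω | ε ≤ ∑ j ∈ Finset.Icc 1 t, (-a j) * w j ω}) := measure_mono hsub
    _ ≤ μ {ω | ε ≤ ∑ j ∈ Finset.Icc 1 t, a j * w j ω}
        + μ {ω | ε ≤ ∑ j ∈ Finset.Icc 1 t, (-a j) * w j ω} := measure_union_le _ _
    _ ≤ ENNReal.ofReal (Real.exp (-((t : ℝ) * ε ^ 2) / (2 * M ^ 2 * β ^ 2)))
        + ENNReal.ofReal (Real.exp (-((t : ℝ) * ε ^ 2) / (2 * M ^ 2 * β ^ 2))) := by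
        gcongr
        · exact one_sided_tail ℱ w M β hM hβ hw_meas hw_cond hw_bdd a t ht haK ε hε0
        · exact one_sided_tail ℱ w M β hM hβ hw_meas hw_cond hw_bdd
            (fun j => -a j) t ht haK' ε hε0
    _ = ENNReal.ofReal (2 * Real.exp (-((t : ℝ) * ε ^ 2) / (2 * M ^ 2 * β ^ 2))) := by
        rw [← ENNReal.ofReal_add (Real.exp_pos _).le (Real.exp_pos _).le]
        congr 1
        ring
/-- Uniform-in-time tail bound for weighted sums of a bounded martingale
difference sequence: union bound over all times `t ≥ T₁`. -/
theorem weighted_mds_uniform_tail_bound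
    {Ω : Type*} {m0 : MeasurableSpace Ω} {μ : Measure Ω} [IsProbabilityMeasure μ]
    (ℱ : Filtration ℕ m0) (w : ℕ → Ω → ℝ) (M β : ℝ) (hM : 0 < M) (hβ : 1 < β)
    (hw_meas : ∀ j, 1 ≤ j → StronglyMeasurable[ℱ j] (w j))
    (hw_cond : ∀ j : ℕ, μ[w (j + 1) | ℱ j] =ᵐ[μ] 0)
    (hw_bdd : ∀ j, ∀ᵐ ω ∂μ, |w j ω| ≤ M)
    (η : ℕ → ℕ → ℝ)
    (hη : ∀ t, 1 ≤ t → ∀ j, 1 ≤ j → j ≤ t → 0 ≤ η t j ∧ η t j ≤ β / t)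
    (ε : ℝ) (hε0 : 0 < ε) (hεM : ε ≤ M * β)
    (T₁ : ℕ) (hT₁ : 1 ≤ T₁) :
    μ {ω | ∃ t, T₁ ≤ t ∧ ε < |∑ j ∈ Finset.Icc 1 t, η t j * w j ω|}
      ≤ ENNReal.ofReal
          ((8 * M ^ 2 * β ^ 2 / ε ^ 2) *
            Real.exp (-((T₁ : ℝ) * ε ^ 2) / (2 * M ^ 2 * β ^ 2))) := by
  have hβ0 : (0:ℝ) < β := lt_trans one_pos hβ
  set x : ℝ := ε ^ 2 / (2 * M ^ 2 * β ^ 2) with hx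
  have hx0 : 0 < x := by positivity
  have hx1 : x ≤ 1 := by
    rw [hx, div_le_one (by positivity)]
    nlinarith [sq_nonneg (M * β)]
  set A : ℕ → Set Ω := fun t => {ω | ε < |∑ j ∈ Finset.Icc 1 t, η t j * w j ω|} with hA
  have hsub : {ω | ∃ t, T₁ ≤ t ∧ ε < |∑ j ∈ Finset.Icc 1 t, η t j * w j ω|}
      ⊆ ⋃ n : ℕ, A (T₁ + n) := by
    rintro ω ⟨t, htT, hω⟩
    refine Set.mem_iUnion.2 ⟨t - T₁, ?_⟩
    have heq : T₁ + (t - T₁) = t := Nat.add_sub_cancel' htT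
    rw [hA]
    simp only [heq, Set.mem_setOf_eq]
    exact hω
  -- per-time bound in geometric form
  have hterm : ∀ n : ℕ, μ (A (T₁ + n))
      ≤ ENNReal.ofReal (2 * Real.exp (-(T₁ : ℝ) * x) * Real.exp (-x) ^ n) := by
    intro n
    have ht1 : 1 ≤ T₁ + n := le_add_right hT₁
    have h2s := two_sided_tail ℱ w M β hM hβ hw_meas hw_cond hw_bdd η hη ε hε0 (T₁ + n) ht1
    refine h2s.trans (le_of_eq ?_)
    have harith : -(((T₁ + n : ℕ) : ℝ) * ε ^ 2) / (2 * M ^ 2 * β ^ 2)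
        = -(T₁ : ℝ) * x + (n : ℝ) * -x := by
      rw [hx]
      push_cast
      field_simp
      ring
    rw [harith, Real.exp_add, Real.exp_nat_mul, mul_assoc]
  have hr0 : (0:ℝ) ≤ Real.exp (-x) := (Real.exp_pos _).le
  have hr1 : Real.exp (-x) < 1 := Real.exp_lt_one_iff.2 (by linarith)
  have hsummable : Summable (fun n : ℕ => 2 * Real.exp (-(T₁ : ℝ) * x) * Real.exp (-x) ^ n) :=
    (summable_geometric_of_lt_one hr0 hr1).mul_left _
  have hnn : ∀ n : ℕ, 0 ≤ 2 * Real.exp (-(T₁ : ℝ) * x) * Real.exp (-x) ^ n :=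
    fun n => by positivity
  -- final real inequality
  have hrle : Real.exp (-x) ≤ 1 - x / 2 := by
    have h1 : x + 1 ≤ Real.exp x := Real.add_one_le_exp x
    rw [Real.exp_neg]
    have h2 : (Real.exp x)⁻¹ ≤ (x + 1)⁻¹ :=
      inv_anti₀ (by linarith) h1
    refine h2.trans ?_
    rw [inv_eq_one_div, div_le_iff₀ (by linarith)]
    nlinarith
  have hfinal : (∑' n : ℕ, 2 * Real.exp (-(T₁ : ℝ) * x) * Real.exp (-x) ^ n)
      ≤ (8 * M ^ 2 * β ^ 2 / ε ^ 2) * Real.exp (-((T₁ : ℝ) * ε ^ 2) / (2 * M ^ 2 * β ^ 2)) := by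
    rw [tsum_mul_left, tsum_geometric_of_lt_one hr0 hr1]
    have hcoef : 8 * M ^ 2 * β ^ 2 / ε ^ 2 = 4 / x := by
      rw [hx]; field_simp; ring
    have hexp : -((T₁ : ℝ) * ε ^ 2) / (2 * M ^ 2 * β ^ 2) = -(T₁ : ℝ) * x := by
      rw [hx]; field_simp
    rw [hcoef, hexp]
    have hinv : (1 - Real.exp (-x))⁻¹ ≤ (x / 2)⁻¹ :=
      inv_anti₀ (by positivity) (by linarith)
    calc 2 * Real.exp (-(T₁ : ℝ) * x) * (1 - Real.exp (-x))⁻¹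
        ≤ 2 * Real.exp (-(T₁ : ℝ) * x) * (x / 2)⁻¹ :=
          mul_le_mul_of_nonneg_left hinv (by positivity)
      _ = 4 / x * Real.exp (-(T₁ : ℝ) * x) := by
          field_simp
          ring
  calc μ {ω | ∃ t, T₁ ≤ t ∧ ε < |∑ j ∈ Finset.Icc 1 t, η t j * w j ω|}
      ≤ μ (⋃ n : ℕ, A (T₁ + n)) := measure_mono hsub
    _ ≤ ∑' n : ℕ, μ (A (T₁ + n)) := measure_iUnion_le _
    _ ≤ ∑' n : ℕ, ENNReal.ofReal (2 * Real.exp (-(T₁ : ℝ) * x) * Real.exp (-x) ^ n) :=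
        ENNReal.tsum_le_tsum hterm
    _ = ENNReal.ofReal (∑' n : ℕ, 2 * Real.exp (-(T₁ : ℝ) * x) * Real.exp (-x) ^ n) :=
        (ENNReal.ofReal_tsum_of_nonneg hnn hsummable).symm
    _ ≤ _ := ENNReal.ofReal_le_ofReal hfinal
end

section
/- Let (Ω, F, P) be a probability space with a filtration (F_t)_{t≥0}, let S be a nonempty finite set with |S| = M, and let (Z_t)_{t≥1} be an S-valued process with Z_t measurable with respect to F_t. Suppose there is q > 0 such that for every t ≥ 0 and every s ∈ S, P(Z_{t+1} = s | F_t) ≥ q almost surely. Let τ = inf{ t ≥ 1 : every element of S appears among Z_1, …, Z_t }. Then E[τ] ≤ (1/q) Σ_{k=1}^{M} 1/k. -/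
open MeasureTheory
open scoped ENNReal

namespace CouponCollectorAux

variable {Ω : Type*} {m0 : MeasurableSpace Ω} {μ : Measure Ω} [IsProbabilityMeasure μ]
variable {S : Type*} [Fintype S] [DecidableEq S] [MeasurableSpace S] [MeasurableSingletonClass S]

set_option linter.unusedSectionVars false

/-- set of states visited during times `1..t`. -/
def visited (Z : ℕ → Ω → S) (t : ℕ) (ω : Ω) : Finset S :=
  (Finset.Icc 1 t).image fun j => Z j ω

lemma mem_visited {Z : ℕ → Ω → S} {t : ℕ} {ω : Ω} {s : S} :
    s ∈ visited Z t ω ↔ ∃ j, 1 ≤ j ∧ j ≤ t ∧ Z j ω = s := by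
  simp only [visited, Finset.mem_image, Finset.mem_Icc]
  constructor
  · rintro ⟨j, ⟨h1, h2⟩, h3⟩; exact ⟨j, h1, h2, h3⟩
  · rintro ⟨j, h1, h2, h3⟩; exact ⟨j, ⟨h1, h2⟩, h3⟩

lemma visited_succ (Z : ℕ → Ω → S) (t : ℕ) (ω : Ω) :
    visited Z (t+1) ω = insert (Z (t+1) ω) (visited Z t ω) := by
  have h : Finset.Icc 1 (t+1) = insert (t+1) (Finset.Icc 1 t) := by
    ext j; simp only [Finset.mem_Icc, Finset.mem_insert]; omega
  simp [visited, h]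

lemma visited_subset_succ (Z : ℕ → Ω → S) (t : ℕ) (ω : Ω) :
    visited Z t ω ⊆ visited Z (t+1) ω := by
  rw [visited_succ]; exact Finset.subset_insert _ _

lemma measurableSet_visited_eq (ℱ : Filtration ℕ m0) (Z : ℕ → Ω → S)
    (hZ : ∀ t, Measurable[ℱ t] (Z t)) (t : ℕ) (F : Finset S) :
    MeasurableSet[ℱ t] {ω | visited Z t ω = F} := by
  have hset : {ω | visited Z t ω = F} = ⋂ s : S, {ω | s ∈ visited Z t ω ↔ s ∈ F} := by
    ext ω
    simp only [Set.mem_setOf_eq, Set.mem_iInter, Finset.ext_iff]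
  rw [hset]
  refine MeasurableSet.iInter fun s => ?_
  have hmem : MeasurableSet[ℱ t] {ω | s ∈ visited Z t ω} := by
    have h : {ω | s ∈ visited Z t ω} = ⋃ j ∈ Finset.Icc 1 t, {ω | Z j ω = s} := by
      ext ω
      simp only [Set.mem_setOf_eq, mem_visited, Set.mem_iUnion, Finset.mem_Icc]
      constructor
      · rintro ⟨j, h1, h2, h3⟩; exact ⟨j, ⟨h1, h2⟩, h3⟩
      · rintro ⟨j, ⟨h1, h2⟩, h3⟩; exact ⟨j, h1, h2, h3⟩
    rw [h]
    refine MeasurableSet.biUnion (Finset.Icc 1 t).countable_toSet fun j hj => ?_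
    have hj' : j ≤ t := (Finset.mem_Icc.mp hj).2
    exact ((hZ j).mono (ℱ.mono hj') le_rfl) (measurableSet_singleton s)
  by_cases hs : s ∈ F
  · have h : {ω | s ∈ visited Z t ω ↔ s ∈ F} = {ω | s ∈ visited Z t ω} := by
      ext ω; simp [hs]
    rw [h]; exact hmem
  · have h : {ω | s ∈ visited Z t ω ↔ s ∈ F} = {ω | s ∈ visited Z t ω}ᶜ := by
      ext ω; simp [hs]
    rw [h]; exact hmem.compl

lemma toReal_biUnion {ι : Type*} (I : Finset ι) (f : ι → Set Ω)
    (hmeas : ∀ i ∈ I, MeasurableSet (f i))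
    (hdisj : Set.PairwiseDisjoint ↑I f) :
    (μ (⋃ i ∈ I, f i)).toReal = ∑ i ∈ I, (μ (f i)).toReal := by
  rw [measure_biUnion_finset hdisj hmeas, ENNReal.toReal_sum]
  exact fun i _ => measure_ne_top μ (f i)

/-- Key conditional-probability consequence: for any `ℱ t`-measurable set `A`,
`q * μ A ≤ μ (A ∩ {Z (t+1) = s})`. -/
lemma key_cond (ℱ : Filtration ℕ m0) (Z : ℕ → Ω → S)
    (hZ : ∀ t, Measurable[ℱ t] (Z t)) (q : ℝ)
    (hcond : ∀ (t : ℕ) (s : S), ∀ᵐ ω ∂μ,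
      q ≤ (μ[Set.indicator {ω' | Z (t + 1) ω' = s} (fun _ => (1 : ℝ)) | ℱ t]) ω)
    (t : ℕ) (s : S) {A : Set Ω} (hA : MeasurableSet[ℱ t] A) :
    q * (μ A).toReal ≤ (μ (A ∩ {ω | Z (t+1) ω = s})).toReal := by
  set B : Set Ω := {ω | Z (t+1) ω = s} with hB
  have hBmeas : MeasurableSet B := by
    have : B = Z (t+1) ⁻¹' {s} := rfl
    rw [this]
    exact ((hZ (t+1)).mono (ℱ.le (t+1)) le_rfl) (measurableSet_singleton s)
  have hAm0 : MeasurableSet A := ℱ.le t A hA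
  have hf : Integrable (Set.indicator B (fun _ => (1:ℝ))) μ :=
    (integrable_const (1:ℝ)).indicator hBmeas
  have h1 : ∫ ω in A, (μ[Set.indicator B (fun _ => (1:ℝ))|ℱ t]) ω ∂μ
      = ∫ ω in A, Set.indicator B (fun _ => (1:ℝ)) ω ∂μ :=
    setIntegral_condExp (ℱ.le t) hf hA
  have h2 : ∫ ω in A, Set.indicator B (fun _ => (1:ℝ)) ω ∂μ = (μ (A ∩ B)).toReal := by
    rw [setIntegral_indicator hBmeas]
    simp [setIntegral_const]; rfl
  have h3 : q * (μ A).toReal ≤ ∫ ω in A, (μ[Set.indicator B (fun _ => (1:ℝ))|ℱ t]) ω ∂μ := by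
    have hconst : ∫ _ω in A, q ∂μ = (μ A).toReal * q := by
      rw [setIntegral_const]; rw [smul_eq_mul]; rfl
    have hmono := setIntegral_mono_ae (s := A)
      ((integrable_const q).integrableOn)
      (integrable_condExp.integrableOn)
      (hcond t s)
    rw [hconst] at hmono
    linarith
  rw [h1, h2] at h3
  exact h3

/-- `n * q ≤ 1` whenever `n ≤ |S|` and each state is hit with probability `≥ q`. -/
lemma card_mul_q_le_one (ℱ : Filtration ℕ m0) (Z : ℕ → Ω → S)
    (hZ : ∀ t, Measurable[ℱ t] (Z t)) (q : ℝ)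
    (hcond : ∀ (t : ℕ) (s : S), ∀ᵐ ω ∂μ,
      q ≤ (μ[Set.indicator {ω' | Z (t + 1) ω' = s} (fun _ => (1 : ℝ)) | ℱ t]) ω)
    (F : Finset S) : (F.card : ℝ) * q ≤ 1 := by
  have hq1 : ∀ s : S, q ≤ (μ {ω | Z 1 ω = s}).toReal := by
    intro s
    have h := key_cond (μ := μ) ℱ Z hZ q hcond 0 s (A := Set.univ) MeasurableSet.univ
    simpa using h
  have hmeas : ∀ s : S, MeasurableSet {ω | Z 1 ω = s} := by
    intro s
    exact ((hZ 1).mono (ℱ.le 1) le_rfl) (measurableSet_singleton s)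
  have hdisj : Set.PairwiseDisjoint (↑F : Set S) (fun s => {ω | Z 1 ω = s}) := by
    intro s _ s' _ hss
    refine Set.disjoint_left.mpr fun ω h1 h2 => hss ?_
    rw [← h1, ← h2]
  have hsum : ∑ s ∈ F, (μ {ω | Z 1 ω = s}).toReal ≤ 1 := by
    rw [← toReal_biUnion F _ (fun s _ => hmeas s) hdisj]
    have := measure_mono (μ := μ) (Set.subset_univ (⋃ s ∈ F, {ω | Z 1 ω = s}))
    have h2 : (μ (⋃ s ∈ F, {ω | Z 1 ω = s})).toReal ≤ (μ Set.univ).toReal :=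
      ENNReal.toReal_mono (measure_ne_top μ _) this
    simpa using h2
  calc (F.card : ℝ) * q = ∑ _s ∈ F, q := by rw [Finset.sum_const, nsmul_eq_mul]
  _ ≤ ∑ s ∈ F, (μ {ω | Z 1 ω = s}).toReal := Finset.sum_le_sum fun s _ => hq1 s
  _ ≤ 1 := hsum


lemma Ak_eq (Z : ℕ → Ω → S) (t k : ℕ) :
    {ω | (visited Z t ω).card = k}
      = ⋃ F ∈ Finset.univ.filter (fun F : Finset S => F.card = k),
          {ω | visited Z t ω = F} := by
  ext ω
  simp only [Set.mem_setOf_eq, Set.mem_iUnion, Finset.mem_filter, Finset.mem_univ, true_and]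
  constructor
  · intro h; exact ⟨visited Z t ω, h, rfl⟩
  · rintro ⟨F, hF, rfl⟩; exact hF

lemma E_disjoint (Z : ℕ → Ω → S) (t : ℕ) (I : Set (Finset S)) :
    Set.PairwiseDisjoint I (fun F => {ω | visited Z t ω = F}) := by
  intro F _ F' _ hFF
  refine Set.disjoint_left.mpr fun ω h1 h2 => hFF ?_
  rw [← h1, ← h2]

lemma measurableSet_Ak (ℱ : Filtration ℕ m0) (Z : ℕ → Ω → S)
    (hZ : ∀ t, Measurable[ℱ t] (Z t)) (t k : ℕ) :
    MeasurableSet[ℱ t] {ω | (visited Z t ω).card = k} := by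
  rw [Ak_eq]
  exact MeasurableSet.biUnion (Finset.countable_toSet _)
    (fun F _ => measurableSet_visited_eq ℱ Z hZ t F)

lemma measurableSet_Bk (ℱ : Filtration ℕ m0) (Z : ℕ → Ω → S)
    (hZ : ∀ t, Measurable[ℱ t] (Z t)) (t k : ℕ) :
    MeasurableSet[ℱ t] {ω | (visited Z t ω).card < k} := by
  have h : {ω | (visited Z t ω).card < k}
      = ⋃ j ∈ Finset.range k, {ω | (visited Z t ω).card = j} := by
    ext ω
    simp only [Set.mem_setOf_eq, Set.mem_iUnion, Finset.mem_range]
    constructor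
    · intro h; exact ⟨_, h, rfl⟩
    · rintro ⟨j, hj, hj'⟩; omega
  rw [h]
  exact MeasurableSet.biUnion (Finset.countable_toSet _)
    (fun j _ => measurableSet_Ak ℱ Z hZ t j)

/-- One-step recursion inequality. -/
lemma step (ℱ : Filtration ℕ m0) (Z : ℕ → Ω → S)
    (hZ : ∀ t, Measurable[ℱ t] (Z t)) (q : ℝ)
    (hcond : ∀ (t : ℕ) (s : S), ∀ᵐ ω ∂μ,
      q ≤ (μ[Set.indicator {ω' | Z (t + 1) ω' = s} (fun _ => (1 : ℝ)) | ℱ t]) ω)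
    (t k : ℕ) :
    (μ {ω | (visited Z (t+1) ω).card = k}).toReal
      ≤ (1 - ((Fintype.card S - k : ℕ) : ℝ) * q)
            * (μ {ω | (visited Z t ω).card = k}).toReal
        + ((μ {ω | (visited Z t ω).card < k}).toReal
            - (μ {ω | (visited Z (t+1) ω).card < k}).toReal) := by
  classical
  set c : ℝ := ((Fintype.card S - k : ℕ) : ℝ) * q with hc
  set Akt : Set Ω := {ω | (visited Z t ω).card = k}
  set Akt1 : Set Ω := {ω | (visited Z (t+1) ω).card = k}
  set Bt : Set Ω := {ω | (visited Z t ω).card < k}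
  set Bt1 : Set Ω := {ω | (visited Z (t+1) ω).card < k}
  have hAktm : MeasurableSet Akt := ℱ.le t _ (measurableSet_Ak ℱ Z hZ t k)
  have hAkt1m : MeasurableSet Akt1 := ℱ.le (t+1) _ (measurableSet_Ak ℱ Z hZ (t+1) k)
  have hBtm : MeasurableSet Bt := ℱ.le t _ (measurableSet_Bk ℱ Z hZ t k)
  have hBt1m : MeasurableSet Bt1 := ℱ.le (t+1) _ (measurableSet_Bk ℱ Z hZ (t+1) k)
  -- inclusion
  have hsub : Akt1 ⊆ (Akt1 ∩ Akt) ∪ (Bt \ Bt1) := by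
    intro ω hω
    have hmono : (visited Z t ω).card ≤ (visited Z (t+1) ω).card :=
      Finset.card_le_card (visited_subset_succ Z t ω)
    have hω' : (visited Z (t+1) ω).card = k := hω
    rcases lt_or_eq_of_le (hω' ▸ hmono) with hlt | heq
    · right
      exact ⟨hlt, fun hcon => by
        have hcon' : (visited Z (t+1) ω).card < k := hcon
        omega⟩
    · left
      exact ⟨hω, show (visited Z t ω).card = k from heq⟩
  have hBsub : Bt1 ⊆ Bt := by
    intro ω hω
    have hmono : (visited Z t ω).card ≤ (visited Z (t+1) ω).card :=
      Finset.card_le_card (visited_subset_succ Z t ω)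
    have hω' : (visited Z (t+1) ω).card < k := hω
    have : (visited Z t ω).card < k := by omega
    exact this
  -- measure of the difference part
  have hdiff : (μ (Bt \ Bt1)).toReal = (μ Bt).toReal - (μ Bt1).toReal := by
    rw [measure_diff hBsub hBt1m.nullMeasurableSet (measure_ne_top μ Bt1),
      ENNReal.toReal_sub_of_le (measure_mono hBsub) (measure_ne_top μ Bt)]
  -- the intersection part
  set 𝒦 : Finset (Finset S) := Finset.univ.filter (fun F : Finset S => F.card = k) with h𝒦
  have hinter : Akt1 ∩ Akt = ⋃ F ∈ 𝒦, ({ω | visited Z t ω = F} ∩ {ω | Z (t+1) ω ∈ F}) := by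
    ext ω
    simp only [Set.mem_inter_iff, Set.mem_setOf_eq, Set.mem_iUnion, Finset.mem_filter,
      Finset.mem_univ, true_and, h𝒦, Akt, Akt1]
    constructor
    · rintro ⟨h1, h2⟩
      refine ⟨visited Z t ω, h2, rfl, ?_⟩
      by_contra hz
      have : visited Z (t+1) ω = insert (Z (t+1) ω) (visited Z t ω) := visited_succ Z t ω
      rw [this, Finset.card_insert_of_notMem hz] at h1
      omega
    · rintro ⟨F, hFk, hVF, hzF⟩
      have h1 : visited Z (t+1) ω = F := by
        rw [visited_succ Z t ω, hVF, Finset.insert_eq_self.mpr hzF]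
      exact ⟨by rw [h1]; exact hFk, by rw [hVF]; exact hFk⟩
  have hperF : ∀ F ∈ 𝒦,
      (μ ({ω | visited Z t ω = F} ∩ {ω | Z (t+1) ω ∈ F})).toReal
        ≤ (1 - c) * (μ {ω | visited Z t ω = F}).toReal := by
    intro F hF
    have hFk : F.card = k := by simpa [h𝒦] using hF
    set E : Set Ω := {ω | visited Z t ω = F}
    set W : Set Ω := {ω | Z (t+1) ω ∈ F}
    have hEmF : MeasurableSet[ℱ t] E := measurableSet_visited_eq ℱ Z hZ t F
    have hEm : MeasurableSet E := ℱ.le t _ hEmF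
    have hWm : MeasurableSet W := by
      have : W = ⋃ s ∈ F, {ω | Z (t+1) ω = s} := by
        ext ω; simp [W]
      rw [this]
      exact MeasurableSet.biUnion F.countable_toSet
        (fun s _ => ((hZ (t+1)).mono (ℱ.le (t+1)) le_rfl) (measurableSet_singleton s))
    have hsplit : μ (E ∩ W) + μ (E \ W) = μ E := measure_inter_add_diff E hWm
    have hsplit' : (μ (E ∩ W)).toReal + (μ (E \ W)).toReal = (μ E).toReal := by
      rw [← ENNReal.toReal_add (measure_ne_top μ _) (measure_ne_top μ _), hsplit]
    have hcompl : E \ W = ⋃ s ∈ Fᶜ, (E ∩ {ω | Z (t+1) ω = s}) := by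
      ext ω
      simp only [Set.mem_diff, Set.mem_setOf_eq, Set.mem_iUnion, Finset.mem_compl,
        Set.mem_inter_iff, E, W]
      constructor
      · rintro ⟨h1, h2⟩; exact ⟨Z (t+1) ω, h2, h1, rfl⟩
      · rintro ⟨s, hs, h1, h2⟩; exact ⟨h1, by rw [h2]; exact hs⟩
    have hlow : c * (μ E).toReal ≤ (μ (E \ W)).toReal := by
      rw [hcompl, toReal_biUnion Fᶜ (fun s => E ∩ {ω | Z (t+1) ω = s})
        (fun s _ => hEm.inter (((hZ (t+1)).mono (ℱ.le (t+1)) le_rfl)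
          (measurableSet_singleton s)))
        (by
          intro s _ s' _ hss
          refine Set.disjoint_left.mpr fun ω h1 h2 => hss ?_
          rw [← h1.2, ← h2.2])]
      have hcard : (Fᶜ.card : ℝ) = ((Fintype.card S - k : ℕ) : ℝ) := by
        rw [Finset.card_compl, hFk]
      calc c * (μ E).toReal = ∑ _s ∈ Fᶜ, q * (μ E).toReal := by
            rw [Finset.sum_const, nsmul_eq_mul, hc, hcard]; ring
      _ ≤ ∑ s ∈ Fᶜ, (μ (E ∩ {ω | Z (t+1) ω = s})).toReal :=
            Finset.sum_le_sum fun s _ => key_cond ℱ Z hZ q hcond t s hEmF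
    linarith
  -- combine
  have hXsum : (μ (Akt1 ∩ Akt)).toReal
      ≤ (1 - c) * (μ Akt).toReal := by
    rw [hinter, toReal_biUnion 𝒦 (fun F => {ω | visited Z t ω = F} ∩ {ω | Z (t+1) ω ∈ F})
      (fun F _ => (ℱ.le t _ (measurableSet_visited_eq ℱ Z hZ t F)).inter
        (by
          have : {ω | Z (t+1) ω ∈ F} = ⋃ s ∈ F, {ω | Z (t+1) ω = s} := by
            ext ω; simp
          rw [this]
          exact MeasurableSet.biUnion F.countable_toSet
            (fun s _ => ((hZ (t+1)).mono (ℱ.le (t+1)) le_rfl) (measurableSet_singleton s))))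
      (by
        have := E_disjoint Z t (↑𝒦 : Set (Finset S))
        intro F hF F' hF' hFF
        exact Disjoint.mono Set.inter_subset_left Set.inter_subset_left
          (this hF hF' hFF))]
    have hAkt_sum : (μ Akt).toReal = ∑ F ∈ 𝒦, (μ {ω | visited Z t ω = F}).toReal := by
      have : Akt = ⋃ F ∈ 𝒦, {ω | visited Z t ω = F} := Ak_eq Z t k
      rw [this, toReal_biUnion 𝒦 (fun F => {ω | visited Z t ω = F})
        (fun F _ => ℱ.le t _ (measurableSet_visited_eq ℱ Z hZ t F))
        (E_disjoint Z t _)]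
    rw [hAkt_sum, Finset.mul_sum]
    exact Finset.sum_le_sum hperF
  have hunion : (μ Akt1).toReal ≤ (μ (Akt1 ∩ Akt)).toReal + (μ (Bt \ Bt1)).toReal := by
    have h1 : μ Akt1 ≤ μ ((Akt1 ∩ Akt) ∪ (Bt \ Bt1)) := measure_mono hsub
    have h2 : μ ((Akt1 ∩ Akt) ∪ (Bt \ Bt1)) ≤ μ (Akt1 ∩ Akt) + μ (Bt \ Bt1) :=
      measure_union_le _ _
    have h3 := le_trans h1 h2
    have h4 : (μ Akt1).toReal ≤ (μ (Akt1 ∩ Akt) + μ (Bt \ Bt1)).toReal :=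
      ENNReal.toReal_mono (by
        exact ENNReal.add_ne_top.mpr ⟨measure_ne_top μ _, measure_ne_top μ _⟩) h3
    rwa [ENNReal.toReal_add (measure_ne_top μ _) (measure_ne_top μ _)] at h4
  rw [hdiff] at hunion
  linarith

lemma tsum_Ak_le (ℱ : Filtration ℕ m0) (Z : ℕ → Ω → S)
    (hZ : ∀ t, Measurable[ℱ t] (Z t)) (q : ℝ) (hq : 0 < q)
    (hcond : ∀ (t : ℕ) (s : S), ∀ᵐ ω ∂μ,
      q ≤ (μ[Set.indicator {ω' | Z (t + 1) ω' = s} (fun _ => (1 : ℝ)) | ℱ t]) ω)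
    (k : ℕ) (hk : k < Fintype.card S) :
    ∑' t : ℕ, μ {ω | (visited Z t ω).card = k}
      ≤ ENNReal.ofReal (1 / (((Fintype.card S - k : ℕ) : ℝ) * q)) := by
  set c : ℝ := ((Fintype.card S - k : ℕ) : ℝ) * q with hcdef
  have hcpos : 0 < c := by
    apply mul_pos _ hq
    have : 1 ≤ Fintype.card S - k := by omega
    exact_mod_cast Nat.lt_of_lt_of_le Nat.zero_lt_one this
  have hc1 : c ≤ 1 := by
    obtain ⟨F, -, hFcard⟩ :=
      Finset.exists_subset_card_eq (s := (Finset.univ : Finset S)) (n := Fintype.card S - k)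
        (by simp [Nat.sub_le])
    have := card_mul_q_le_one ℱ Z hZ q hcond F
    rwa [hFcard] at this
  set d : ℕ → ℝ := fun t => (μ {ω | (visited Z t ω).card = k}).toReal with hd
  set b : ℕ → ℝ := fun t => (μ {ω | (visited Z t ω).card < k}).toReal with hb
  have hbnonneg : ∀ t, 0 ≤ b t := fun t => ENNReal.toReal_nonneg
  have hd0b0 : d 0 + b 0 ≤ 1 := by
    have hdisj : Disjoint {ω | (visited Z 0 ω).card = k} {ω | (visited Z 0 ω).card < k} := by
      refine Set.disjoint_left.mpr fun ω h1 h2 => ?_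
      have h1' : (visited Z 0 ω).card = k := h1
      have h2' : (visited Z 0 ω).card < k := h2
      omega
    have hu : μ ({ω | (visited Z 0 ω).card = k} ∪ {ω | (visited Z 0 ω).card < k})
        = μ {ω | (visited Z 0 ω).card = k} + μ {ω | (visited Z 0 ω).card < k} :=
      measure_union hdisj (ℱ.le 0 _ (measurableSet_Bk ℱ Z hZ 0 k))
    have hle : (μ ({ω | (visited Z 0 ω).card = k} ∪ {ω | (visited Z 0 ω).card < k})).toReal ≤ 1 := by
      have h2 : (μ ({ω | (visited Z 0 ω).card = k} ∪ {ω | (visited Z 0 ω).card < k})).toReal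
          ≤ (μ (Set.univ : Set Ω)).toReal :=
        ENNReal.toReal_mono (measure_ne_top μ Set.univ)
          (measure_mono (Set.subset_univ _))
      simpa using h2
    rw [hu, ENNReal.toReal_add (measure_ne_top μ _) (measure_ne_top μ _)] at hle
    exact hle
  have hS : ∀ T : ℕ, ∑ t ∈ Finset.range T, d t ≤ 1 / c := by
    intro T
    induction T with
    | zero => simp; positivity
    | succ T ih =>
      rw [Finset.sum_range_succ']
      have hsum1 : ∑ t ∈ Finset.range T, d (t + 1)
          ≤ (1 - c) * ∑ t ∈ Finset.range T, d t + (b 0 - b T) := by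
        calc ∑ t ∈ Finset.range T, d (t + 1)
            ≤ ∑ t ∈ Finset.range T, ((1 - c) * d t + (b t - b (t + 1))) :=
              Finset.sum_le_sum fun t _ => step ℱ Z hZ q hcond t k
        _ = (1 - c) * ∑ t ∈ Finset.range T, d t
              + ∑ t ∈ Finset.range T, (b t - b (t + 1)) := by
              rw [Finset.sum_add_distrib, Finset.mul_sum]
        _ = (1 - c) * ∑ t ∈ Finset.range T, d t + (b 0 - b T) := by
              rw [Finset.sum_range_sub' b T]
      have hinv : (1 - c) * (1 / c) = 1 / c - 1 := by field_simp
      have hmul : (1 - c) * ∑ t ∈ Finset.range T, d t ≤ (1 - c) * (1 / c) :=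
        mul_le_mul_of_nonneg_left ih (by linarith)
      have hbT := hbnonneg T
      linarith
  have hofReal : ∀ T : ℕ, ∑ t ∈ Finset.range T, μ {ω | (visited Z t ω).card = k}
      = ENNReal.ofReal (∑ t ∈ Finset.range T, d t) := by
    intro T
    rw [ENNReal.ofReal_sum_of_nonneg (fun _ _ => ENNReal.toReal_nonneg)]
    exact Finset.sum_congr rfl fun t _ =>
      (ENNReal.ofReal_toReal (measure_ne_top μ _)).symm
  rw [ENNReal.tsum_eq_iSup_sum' (fun n => Finset.range n)
    (fun t => Finset.exists_nat_subset_range t)]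
  refine iSup_le fun T => ?_
  rw [hofReal T]
  exact ENNReal.ofReal_le_ofReal (hS T)

end CouponCollectorAux

open CouponCollectorAux

/-- Coupon-collector bound for the covering time of a process which visits
every state at each step with conditional probability at least `q`. -/
theorem covering_time_coupon_collector
    {Ω : Type*} {m0 : MeasurableSpace Ω} {μ : Measure Ω} [IsProbabilityMeasure μ]
    (ℱ : Filtration ℕ m0)
    (S : Type*) [Fintype S] [Nonempty S] [MeasurableSpace S] [MeasurableSingletonClass S]
    (M : ℕ) (hM : Fintype.card S = M)
    (Z : ℕ → Ω → S) (hZ : ∀ t, Measurable[ℱ t] (Z t))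
    (q : ℝ) (hq : 0 < q)
    (hcond : ∀ (t : ℕ) (s : S), ∀ᵐ ω ∂μ,
      q ≤ (μ[Set.indicator {ω' | Z (t + 1) ω' = s} (fun _ => (1 : ℝ)) | ℱ t]) ω) :
    ∫⁻ ω,
        sInf {T : ℝ≥0∞ | ∃ t : ℕ, T = (t : ℝ≥0∞) ∧ 1 ≤ t ∧
          ∀ s : S, ∃ j : ℕ, 1 ≤ j ∧ j ≤ t ∧ Z j ω = s} ∂μ
      ≤ ENNReal.ofReal ((1 / q) * ∑ k ∈ Finset.Icc 1 M, (1 : ℝ) / k) := by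
  classical
  have hM1 : 1 ≤ M := by rw [← hM]; exact Fintype.card_pos
  set U : ℕ → Set Ω := fun t => {ω | (visited Z t ω).card ≠ M} with hU
  have hUmeas : ∀ t, MeasurableSet (U t) := fun t =>
    (ℱ.le t _ (measurableSet_Ak ℱ Z hZ t M)).compl
  have hcov : ∀ (t : ℕ) (ω : Ω),
      (∀ s : S, ∃ j, 1 ≤ j ∧ j ≤ t ∧ Z j ω = s) ↔ (visited Z t ω).card = M := by
    intro t ω
    rw [← hM]
    constructor
    · intro h
      have huniv : visited Z t ω = Finset.univ :=
        Finset.eq_univ_iff_forall.mpr fun s => mem_visited.mpr (h s)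
      rw [huniv]; exact Finset.card_univ
    · intro h s
      have huniv : visited Z t ω = Finset.univ := Finset.eq_univ_of_card _ h
      have : s ∈ visited Z t ω := by rw [huniv]; exact Finset.mem_univ s
      exact mem_visited.mp this
  -- step 1 : pointwise bound of the covering time by a sum of indicators
  have hpt : ∀ ω : Ω,
      sInf {T : ℝ≥0∞ | ∃ t : ℕ, T = (t : ℝ≥0∞) ∧ 1 ≤ t ∧
          ∀ s : S, ∃ j : ℕ, 1 ≤ j ∧ j ≤ t ∧ Z j ω = s}
        ≤ ∑' t : ℕ, Set.indicator (U t) (fun _ => (1 : ℝ≥0∞)) ω := by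
    intro ω
    by_cases hex : ∃ t : ℕ, (visited Z t ω).card = M
    · set t₀ := Nat.find hex with ht₀def
      have ht₀ : (visited Z t₀ ω).card = M := Nat.find_spec hex
      have hmin : ∀ t, t < t₀ → (visited Z t ω).card ≠ M := fun t ht => Nat.find_min hex ht
      have h1t₀ : 1 ≤ t₀ := by
        rcases Nat.eq_zero_or_pos t₀ with h0 | h
        · exfalso
          rw [h0] at ht₀
          have : visited Z 0 ω = ∅ := by
            simp [visited]
          rw [this] at ht₀
          simp at ht₀
          omega
        · exact h
      have hmem : (t₀ : ℝ≥0∞) ∈ {T : ℝ≥0∞ | ∃ t : ℕ, T = (t : ℝ≥0∞) ∧ 1 ≤ t ∧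
          ∀ s : S, ∃ j : ℕ, 1 ≤ j ∧ j ≤ t ∧ Z j ω = s} :=
        ⟨t₀, rfl, h1t₀, (hcov t₀ ω).mpr ht₀⟩
      refine le_trans (sInf_le hmem) ?_
      have hsum : ∑ t ∈ Finset.range t₀, Set.indicator (U t) (fun _ => (1 : ℝ≥0∞)) ω
          = (t₀ : ℝ≥0∞) := by
        rw [Finset.sum_congr rfl (fun t ht => Set.indicator_of_mem
          (show ω ∈ U t from hmin t (Finset.mem_range.mp ht)) _)]
        simp
      calc (t₀ : ℝ≥0∞) = ∑ t ∈ Finset.range t₀, Set.indicator (U t) (fun _ => (1 : ℝ≥0∞)) ω :=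
            hsum.symm
      _ ≤ ∑' t : ℕ, Set.indicator (U t) (fun _ => (1 : ℝ≥0∞)) ω :=
            ENNReal.sum_le_tsum _
    · push_neg at hex
      have hall : ∀ t : ℕ, Set.indicator (U t) (fun _ => (1 : ℝ≥0∞)) ω = 1 := fun t =>
        Set.indicator_of_mem (show ω ∈ U t from hex t) _
      rw [tsum_congr hall]
      simp [ENNReal.tsum_const_eq_top_of_ne_zero]
  -- step 2 : integrate
  have hint : ∫⁻ ω,
      sInf {T : ℝ≥0∞ | ∃ t : ℕ, T = (t : ℝ≥0∞) ∧ 1 ≤ t ∧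
          ∀ s : S, ∃ j : ℕ, 1 ≤ j ∧ j ≤ t ∧ Z j ω = s} ∂μ
      ≤ ∑' t : ℕ, μ (U t) := by
    refine le_trans (lintegral_mono hpt) ?_
    rw [lintegral_tsum fun t => (measurable_const.indicator (hUmeas t)).aemeasurable]
    refine le_of_eq (tsum_congr fun t => ?_)
    rw [lintegral_indicator (hUmeas t), setLIntegral_one]
  -- step 3 : decompose the uncovered event by the number of visited states
  have hUdecomp : ∀ t : ℕ, μ (U t) = ∑ k ∈ Finset.range M, μ {ω | (visited Z t ω).card = k} := by
    intro t
    have hdec : U t = ⋃ k ∈ Finset.range M, {ω | (visited Z t ω).card = k} := by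
      ext ω
      simp only [hU, Set.mem_setOf_eq, Set.mem_iUnion, Finset.mem_range]
      constructor
      · intro h
        have hle : (visited Z t ω).card ≤ M := by
          rw [← hM]; exact Finset.card_le_univ _
        exact ⟨(visited Z t ω).card, by omega, rfl⟩
      · rintro ⟨k, hk, hk'⟩; omega
    rw [hdec]
    refine measure_biUnion_finset ?_ fun k _ => ℱ.le t _ (measurableSet_Ak ℱ Z hZ t k)
    intro k _ k' _ hkk
    refine Set.disjoint_left.mpr fun ω h1 h2 => hkk ?_
    have h1' : (visited Z t ω).card = k := h1
    have h2' : (visited Z t ω).card = k' := h2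
    omega
  -- step 4 : swap the sums and apply the per-level bound
  have hswap : ∑' t : ℕ, μ (U t)
      ≤ ∑ k ∈ Finset.range M, ENNReal.ofReal (1 / (((M - k : ℕ) : ℝ) * q)) := by
    calc ∑' t : ℕ, μ (U t)
        = ∑' t : ℕ, ∑ k ∈ Finset.range M, μ {ω | (visited Z t ω).card = k} :=
          tsum_congr hUdecomp
    _ = ∑ k ∈ Finset.range M, ∑' t : ℕ, μ {ω | (visited Z t ω).card = k} :=
          Summable.tsum_finsetSum fun k _ => ENNReal.summable
    _ ≤ ∑ k ∈ Finset.range M, ENNReal.ofReal (1 / (((M - k : ℕ) : ℝ) * q)) := by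
          refine Finset.sum_le_sum fun k hk => ?_
          have hkM : k < M := Finset.mem_range.mp hk
          have := tsum_Ak_le ℱ Z hZ q hq hcond k (by rw [hM]; exact hkM)
          rwa [hM] at this
  -- step 5 : the arithmetic identity
  have harith : ∑ k ∈ Finset.range M, ENNReal.ofReal (1 / (((M - k : ℕ) : ℝ) * q))
      = ENNReal.ofReal ((1 / q) * ∑ k ∈ Finset.Icc 1 M, (1 : ℝ) / k) := by
    rw [← ENNReal.ofReal_sum_of_nonneg (fun k _ => by positivity)]
    congr 1
    have hre : ∀ k ∈ Finset.range M, 1 / (((M - k : ℕ) : ℝ) * q)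
        = (1 / q) * (1 / ((M - k : ℕ) : ℝ)) := by
      intro k hk
      rw [mul_comm ((M - k : ℕ) : ℝ) q, ← one_div_mul_one_div]
    rw [Finset.sum_congr rfl hre, ← Finset.mul_sum]
    congr 1
    refine Finset.sum_nbij' (fun k => M - k) (fun j => M - j) ?_ ?_ ?_ ?_ ?_
    · intro k hk
      have := Finset.mem_range.mp hk
      simp only [Finset.mem_Icc]; omega
    · intro j hj
      have := Finset.mem_Icc.mp hj
      simp only [Finset.mem_range]; omega
    · intro k hk
      have := Finset.mem_range.mp hk
      show M - (M - k) = k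
      omega
    · intro j hj
      have := Finset.mem_Icc.mp hj
      show M - (M - j) = j
      omega
    · intro k hk
      rfl
  calc ∫⁻ ω, sInf {T : ℝ≥0∞ | ∃ t : ℕ, T = (t : ℝ≥0∞) ∧ 1 ≤ t ∧
          ∀ s : S, ∃ j : ℕ, 1 ≤ j ∧ j ≤ t ∧ Z j ω = s} ∂μ
      ≤ ∑' t : ℕ, μ (U t) := hint
  _ ≤ ∑ k ∈ Finset.range M, ENNReal.ofReal (1 / (((M - k : ℕ) : ℝ) * q)) := hswap
  _ = ENNReal.ofReal ((1 / q) * ∑ k ∈ Finset.Icc 1 M, (1 : ℝ) / k) := harith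
end
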